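/- arXiv:0809.3724 — 8 statements merged into one kernel-verified Lean document; each statement's English description precedes it below -/
import Mathlib

section
/- Let (G,a) be a weighted graph in which every edge is incident to at least one vertex of weight 1. Then α(G,a) = β(G,a), i.e., the maximum weight of a stable set equals the maximum worth of a vertex subset. -/
open Finset

def IsStable {V : Type} (G : SimpleGraph V) (S : Finset V) : Prop :=
  ∀ u ∈ S, ∀ v ∈ S, ¬ G.Adj u v

open Classical in
/-- Number of edges of `G` with both endpoints in `S`. -/
noncomputable def edgesIn {V : Type} [Fintype V] (G : SimpleGraph V) (S : Finset V) : ℕ :=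
  (Set.toFinite {e ∈ G.edgeSet | ∀ v ∈ e, v ∈ S}).toFinset.card

open Classical in
/-- Maximum weight of a stable set. -/
noncomputable def alphaW {V : Type} [Fintype V] (G : SimpleGraph V) (a : V → ℤ) : ℤ :=
  Finset.sup' (Finset.univ.powerset.filter fun S => IsStable G S)
    ⟨∅, by simp [IsStable]⟩ (fun S => ∑ v ∈ S, a v)

/-- Maximum worth of a vertex subset. -/
noncomputable def betaW {V : Type} [Fintype V] (G : SimpleGraph V) (a : V → ℤ) : ℤ :=
  Finset.sup' Finset.univ.powerset ⟨∅, by simp⟩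
    (fun S => (∑ v ∈ S, a v) - (edgesIn G S : ℤ))

open Classical in
lemma edgesIn_eq_zero_of_stable {V : Type} [Fintype V] (G : SimpleGraph V)
    {S : Finset V} (hS : IsStable G S) : edgesIn G S = 0 := by
  classical
  rw [edgesIn, Finset.card_eq_zero, Finset.eq_empty_iff_forall_notMem]
  intro e he
  rw [Set.Finite.mem_toFinset] at he
  obtain ⟨he1, he2⟩ := he
  induction e with
  | h u v =>
    exact hS u (he2 u (by simp)) v (he2 v (by simp)) he1

open Classical in
lemma edgesIn_erase_lt {V : Type} [Fintype V] (G : SimpleGraph V)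
    {S : Finset V} {u v : V} (hu : u ∈ S) (hv : v ∈ S) (huv : G.Adj u v) :
    edgesIn G (S.erase v) < edgesIn G S := by
  classical
  apply Finset.card_lt_card
  constructor
  · intro e he
    rw [Set.Finite.mem_toFinset] at he ⊢
    exact ⟨he.1, fun w hw => Finset.mem_of_mem_erase (he.2 w hw)⟩
  · intro hsub
    have h1 : s(u, v) ∈ (Set.toFinite {e ∈ G.edgeSet | ∀ w ∈ e, w ∈ S}).toFinset := by
      rw [Set.Finite.mem_toFinset]
      refine ⟨huv, ?_⟩
      intro w hw
      rcases Sym2.mem_iff.mp hw with h | h <;> simp [h, hu, hv]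
    have h2 := hsub h1
    rw [Set.Finite.mem_toFinset] at h2
    have := h2.2 v (by simp)
    simp at this

theorem alpha_eq_beta_of_unit_cover {V : Type} [Fintype V]
    (G : SimpleGraph V) (a : V → ℤ) (ha : ∀ v, 1 ≤ a v)
    (hcov : ∀ e ∈ G.edgeSet, ∃ v ∈ e, a v = 1) :
    alphaW G a = betaW G a := by
  classical
  -- key: every set's worth is ≤ alphaW
  have hstab_le : ∀ T : Finset V, IsStable G T → (∑ v ∈ T, a v) ≤ alphaW G a := by
    intro T hT
    rw [alphaW]
    exact Finset.le_sup' (fun S => ∑ v ∈ S, a v)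
      (Finset.mem_filter.mpr ⟨Finset.mem_powerset.mpr (Finset.subset_univ T), hT⟩)
  have key : ∀ n (S : Finset V), S.card ≤ n →
      (∑ v ∈ S, a v) - (edgesIn G S : ℤ) ≤ alphaW G a := by
    intro n
    induction n with
    | zero =>
      intro S hS
      have : S = ∅ := Finset.card_eq_zero.mp (Nat.le_zero.mp hS)
      subst this
      have h0 : edgesIn G (∅ : Finset V) = 0 :=
        edgesIn_eq_zero_of_stable G (by simp [IsStable])
      rw [h0]
      simpa using hstab_le ∅ (by simp [IsStable])
    | succ n ih =>
      intro S hS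
      by_cases hstab : IsStable G S
      · rw [edgesIn_eq_zero_of_stable G hstab]
        simpa using hstab_le S hstab
      · simp only [IsStable, not_forall] at hstab
        obtain ⟨u, hu, v, hv, huv⟩ := hstab
        rw [not_not] at huv
        have hedge : s(u, v) ∈ G.edgeSet := huv
        obtain ⟨w, hw, haw⟩ := hcov _ hedge
        -- wlog: the weight-1 vertex is the second one
        have main : ∀ u v : V, u ∈ S → v ∈ S → G.Adj u v → a v = 1 →
            (∑ x ∈ S, a x) - (edgesIn G S : ℤ) ≤ alphaW G a := by
          intro u v hu hv huv hav
          have hlt := edgesIn_erase_lt G hu hv huv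
          have hcard : (S.erase v).card ≤ n := by
            have := Finset.card_erase_of_mem hv
            omega
          have hrec := ih (S.erase v) hcard
          have hsum : ∑ x ∈ S.erase v, a x = (∑ x ∈ S, a x) - a v :=
            Finset.sum_erase_eq_sub hv
          rw [hsum, hav] at hrec
          have : (edgesIn G (S.erase v) : ℤ) + 1 ≤ edgesIn G S := by
            exact_mod_cast hlt
          linarith
        rcases Sym2.mem_iff.mp hw with h | h
        · subst h
          exact main v w hv hu huv.symm haw
        · subst h
          exact main u w hu hv huv haw
  -- α ≤ β
  apply le_antisymm
  · apply Finset.sup'_le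
    intro T hT
    rw [Finset.mem_filter] at hT
    have h0 : edgesIn G T = 0 := edgesIn_eq_zero_of_stable G hT.2
    have : (∑ v ∈ T, a v) - (edgesIn G T : ℤ) ≤ betaW G a := by
      rw [betaW]
      exact Finset.le_sup' (fun S => (∑ v ∈ S, a v) - (edgesIn G S : ℤ)) (by simp)
    rw [h0] at this
    simpa using this
  · apply Finset.sup'_le
    intro S _
    exact key S.card S le_rfl
end

section
/- For every k ≥ 1, there exists a constant d_k such that every digraph D on at least d_k vertices contains an acyclic tournament of order k either in D or in its complement. -/
/-- `f : Fin k → W` describes an acyclic tournament of order `k` in the digraph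
with arc relation `D` if it is injective and all arcs go forward. -/
def IsAcyclicTournamentIn {W : Type} (D : W → W → Prop) (k : ℕ) (f : Fin k → W) : Prop :=
  Function.Injective f ∧ ∀ i j : Fin k, i < j → D (f i) (f j)

open Finset in
lemma ramsey_aux_ordered : ∀ a b : ℕ, ∃ n : ℕ, ∀ (c : ℕ → ℕ → Prop) (S : Finset ℕ),
    n ≤ S.card →
    (∃ T ⊆ S, T.card = a ∧ ∀ i ∈ T, ∀ j ∈ T, i < j → c i j) ∨
    (∃ T ⊆ S, T.card = b ∧ ∀ i ∈ T, ∀ j ∈ T, i < j → ¬ c i j) := by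
  intro a
  induction a with
  | zero =>
    intro b
    exact ⟨0, fun c S _ => Or.inl ⟨∅, Finset.empty_subset _, rfl, by simp⟩⟩
  | succ a iha =>
    intro b
    induction b with
    | zero => exact ⟨0, fun c S _ => Or.inr ⟨∅, Finset.empty_subset _, rfl, by simp⟩⟩
    | succ b ihb =>
      obtain ⟨n1, h1⟩ := iha (b + 1)
      obtain ⟨n2, h2⟩ := ihb
      classical
      refine ⟨n1 + n2 + 1, fun c S hS => ?_⟩
      have hne : S.Nonempty := Finset.card_pos.mp (by omega)
      set v := S.min' hne with hv
      have hvS : v ∈ S := S.min'_mem hne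
      set S1 := (S.erase v).filter (fun w => c v w) with hS1
      set S2 := (S.erase v).filter (fun w => ¬ c v w) with hS2
      have hS1sub : S1 ⊆ S.erase v := Finset.filter_subset _ _
      have hS2sub : S2 ⊆ S.erase v := Finset.filter_subset _ _
      have hcard : S1.card + S2.card = S.card - 1 := by
        rw [hS1, hS2, Finset.card_filter_add_card_filter_not,
          Finset.card_erase_of_mem hvS]
      have hvlt : ∀ w ∈ S.erase v, v < w := by
        intro w hw
        have h1 := Finset.mem_erase.mp hw
        exact lt_of_le_of_ne (S.min'_le w h1.2) (Ne.symm h1.1)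
      have hcases : n1 ≤ S1.card ∨ n2 ≤ S2.card := by omega
      rcases hcases with hc1 | hc2
      · rcases h1 c S1 hc1 with ⟨T, hTS, hTa, hTc⟩ | ⟨T, hTS, hTb, hTc⟩
        · -- insert v into T
          have hvT : v ∉ T := fun hvt => lt_irrefl v (hvlt v (hS1sub (hTS hvt)))
          refine Or.inl ⟨insert v T, ?_, ?_, ?_⟩
          · intro x hx
            rcases Finset.mem_insert.mp hx with rfl | hx
            · exact hvS
            · exact Finset.mem_of_mem_erase (hS1sub (hTS hx))
          · rw [Finset.card_insert_of_notMem hvT, hTa]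
          · intro i hi j hj hij
            have hjT : j ∈ T := by
              rcases Finset.mem_insert.mp hj with rfl | hj
              · exfalso
                rcases Finset.mem_insert.mp hi with rfl | hi
                · exact lt_irrefl _ hij
                · exact absurd hij (not_lt.mpr (le_of_lt (hvlt i (hS1sub (hTS hi)))))
              · exact hj
            rcases Finset.mem_insert.mp hi with rfl | hi
            · exact (Finset.mem_filter.mp (hTS hjT)).2
            · exact hTc i hi j hjT hij
        · exact Or.inr ⟨T, fun x hx => Finset.mem_of_mem_erase (hS1sub (hTS hx)), hTb, hTc⟩
      · rcases h2 c S2 hc2 with ⟨T, hTS, hTa, hTc⟩ | ⟨T, hTS, hTb, hTc⟩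
        · exact Or.inl ⟨T, fun x hx => Finset.mem_of_mem_erase (hS2sub (hTS hx)), hTa, hTc⟩
        · have hvT : v ∉ T := fun hvt => lt_irrefl v (hvlt v (hS2sub (hTS hvt)))
          refine Or.inr ⟨insert v T, ?_, ?_, ?_⟩
          · intro x hx
            rcases Finset.mem_insert.mp hx with rfl | hx
            · exact hvS
            · exact Finset.mem_of_mem_erase (hS2sub (hTS hx))
          · rw [Finset.card_insert_of_notMem hvT, hTb]
          · intro i hi j hj hij
            have hjT : j ∈ T := by
              rcases Finset.mem_insert.mp hj with rfl | hj
              · exfalso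
                rcases Finset.mem_insert.mp hi with rfl | hi
                · exact lt_irrefl _ hij
                · exact absurd hij (not_lt.mpr (le_of_lt (hvlt i (hS2sub (hTS hi)))))
              · exact hj
            rcases Finset.mem_insert.mp hi with rfl | hi
            · exact (Finset.mem_filter.mp (hTS hjT)).2
            · exact hTc i hi j hjT hij

theorem ramsey_digraph_acyclic_tournament (k : ℕ) (hk : 1 ≤ k) :
    ∃ d : ℕ, ∀ (W : Type) [Fintype W] (D : W → W → Prop),
      d ≤ Fintype.card W →
        (∃ f : Fin k → W, IsAcyclicTournamentIn D k f) ∨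
        (∃ f : Fin k → W,
          IsAcyclicTournamentIn (fun x y => x ≠ y ∧ ¬ D x y) k f) := by
  obtain ⟨n, hn⟩ := ramsey_aux_ordered k k
  refine ⟨n, fun W _ D hW => ?_⟩
  classical
  set N := Fintype.card W with hN
  let e : Fin N ≃ W := (Fintype.equivFin W).symm
  let c : ℕ → ℕ → Prop := fun i j =>
    ∃ (hi : i < N) (hj : j < N), D (e ⟨i, hi⟩) (e ⟨j, hj⟩)
  have hScard : n ≤ (Finset.range N).card := by rwa [Finset.card_range]
  rcases hn c (Finset.range N) hScard with ⟨T, hTS, hTk, hTc⟩ | ⟨T, hTS, hTk, hTc⟩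
  · left
    let g : Fin k → ℕ := fun i => T.orderIsoOfFin hTk i
    have hg : StrictMono g := fun i j hij => (T.orderIsoOfFin hTk).strictMono hij
    have hgT : ∀ i, g i ∈ T := fun i => (T.orderIsoOfFin hTk i).2
    have hgN : ∀ i, g i < N := fun i => Finset.mem_range.mp (hTS (hgT i))
    refine ⟨fun i => e ⟨g i, hgN i⟩, ?_, ?_⟩
    · intro i j hij
      have := e.injective hij
      have : g i = g j := by simpa using this
      exact hg.injective this
    · intro i j hij
      obtain ⟨hi, hj, hD⟩ := hTc (g i) (hgT i) (g j) (hgT j) (hg hij)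
      exact hD
  · right
    let g : Fin k → ℕ := fun i => T.orderIsoOfFin hTk i
    have hg : StrictMono g := fun i j hij => (T.orderIsoOfFin hTk).strictMono hij
    have hgT : ∀ i, g i ∈ T := fun i => (T.orderIsoOfFin hTk i).2
    have hgN : ∀ i, g i < N := fun i => Finset.mem_range.mp (hTS (hgT i))
    refine ⟨fun i => e ⟨g i, hgN i⟩, ?_, ?_⟩
    · intro i j hij
      have := e.injective hij
      have : g i = g j := by simpa using this
      exact hg.injective this
    · intro i j hij
      have hnc := hTc (g i) (hgT i) (g j) (hgT j) (hg hij)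
      constructor
      · intro heq
        have : g i = g j := by simpa using e.injective heq
        exact absurd this (hg hij).ne
      · intro hD
        exact hnc ⟨hgN i, hgN j, hD⟩
end

section
/- For every k ≥ 1, with a_k = (3^k - 1)/2 (i.e., a_1 = 1 and a_k = 3·a_{k-1} + 1): for every acyclic tournament D on at least a_k vertices, any blow-up D' of D contains a D-admissible acyclic tournament of order k. -/
/-- Arc relation of a blow-up: each vertex `v` of the base digraph `D` is
replaced by three copies `(v, 0), (v, 1), (v, 2)`, and for each arc `(v, w)`
of `D` a nonempty set `I v w` of copies of `v` selects the arcs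
`(v, i) → (w, j)` for `i ∈ I v w` and all `j`. -/
def BlowUpAdj {W : Type} (D : W → W → Prop) (I : W → W → Finset (Fin 3)) :
    W × Fin 3 → W × Fin 3 → Prop :=
  fun p q => D p.1 q.1 ∧ p.2 ∈ I p.1 q.1

/-- A `D`-admissible acyclic tournament of order `k` in a blow-up: the list of
vertices uses at most one copy of each base vertex (first components are
injective) and all arcs go forward. -/
def IsAdmissibleAcyclicTournament {W : Type} (D' : W × Fin 3 → W × Fin 3 → Prop)
    (k : ℕ) (f : Fin k → W × Fin 3) : Prop :=
  Function.Injective (fun i => (f i).1) ∧ ∀ i j : Fin k, i < j → D' (f i) (f j)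

lemma blow_aux : ∀ (k : ℕ), 1 ≤ k → ∀ (W : Type) [Fintype W] [LinearOrder W]
    (I : W → W → Finset (Fin 3)), (3 ^ k - 1) / 2 ≤ Fintype.card W →
    (∀ v w : W, v < w → (I v w).Nonempty) →
    ∃ f : Fin k → W × Fin 3,
      IsAdmissibleAcyclicTournament (BlowUpAdj (· < ·) I) k f := by
  intro k hk
  induction k, hk using Nat.le_induction with
  | base =>
    intro W _ _ I hcard hI
    have h1 : 0 < Fintype.card W := by simp at hcard; omega
    obtain ⟨v⟩ := Fintype.card_pos_iff.mp h1
    refine ⟨fun _ => (v, 0), ?_, ?_⟩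
    · intro a b _; exact Subsingleton.elim a b
    · intro i j hij; exact absurd hij (by omega)
  | succ m hm IH =>
    intro W _ _ I hcard hI
    -- arithmetic
    have hodd : 3 ^ m % 2 = 1 := by
      have := Nat.pow_mod 3 m 2; simpa using this
    have hpow : 3 ^ (m + 1) = 3 * 3 ^ m := by ring
    set a := (3 ^ m - 1) / 2 with ha
    have hrec : (3 ^ (m + 1) - 1) / 2 = 3 * a + 1 := by
      have h1 : 1 ≤ 3 ^ m := Nat.one_le_pow _ _ (by norm_num)
      omega
    have hn : 3 * a + 1 ≤ Fintype.card W := hrec ▸ hcard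
    have hWpos : 0 < Fintype.card W := by omega
    have hWne : (Finset.univ : Finset W).Nonempty := Finset.univ_nonempty_iff.mpr
      (Fintype.card_pos_iff.mp hWpos)
    set v := Finset.univ.min' hWne with hv
    have hmin : ∀ w : W, w ≠ v → v < w := by
      intro w hw
      exact lt_of_le_of_ne (Finset.min'_le _ _ (Finset.mem_univ w)) (Ne.symm hw)
    set T := Finset.univ.erase v with hT
    have hTcard : T.card = Fintype.card W - 1 := by
      rw [hT, Finset.card_erase_of_mem (Finset.mem_univ v), Finset.card_univ]
    set S : Fin 3 → Finset W := fun i =>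
      Finset.univ.filter (fun w => v < w ∧ i ∈ I v w) with hS
    have hsub : T ⊆ S 0 ∪ S 1 ∪ S 2 := by
      intro w hw
      have hvw : v < w := hmin w (Finset.ne_of_mem_erase hw)
      obtain ⟨i, hi⟩ := hI v w hvw
      have hmem : w ∈ S i := Finset.mem_filter.mpr ⟨Finset.mem_univ w, hvw, hi⟩
      fin_cases i
      · exact Finset.mem_union_left _ (Finset.mem_union_left _ hmem)
      · exact Finset.mem_union_left _ (Finset.mem_union_right _ hmem)
      · exact Finset.mem_union_right _ hmem
    have hex : ∃ i : Fin 3, a ≤ (S i).card := by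
      by_contra h
      push_neg at h
      have h0 := h 0; have h1 := h 1; have h2 := h 2
      have hc : T.card ≤ (S 0).card + (S 1).card + (S 2).card := by
        calc T.card ≤ (S 0 ∪ S 1 ∪ S 2).card := Finset.card_le_card hsub
        _ ≤ (S 0 ∪ S 1).card + (S 2).card := Finset.card_union_le _ _
        _ ≤ (S 0).card + (S 1).card + (S 2).card := by
            exact Nat.add_le_add_right (Finset.card_union_le _ _) _
      omega
    obtain ⟨ic, hic⟩ := hex
    -- apply IH to the subtype
    have hcard' : a ≤ Fintype.card ↥(S ic) := by rwa [Fintype.card_coe]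
    obtain ⟨f', hf'inj, hf'adj⟩ :=
      IH ↥(S ic) (fun p q => I p.1 q.1) hcard'
        (fun p q hpq => hI p.1 q.1 (by exact_mod_cast hpq))
    have hSmem : ∀ p : ↥(S ic), v < (p : W) ∧ ic ∈ I v (p : W) := by
      intro p
      exact (Finset.mem_filter.mp p.2).2
    refine ⟨Fin.cons (v, ic) (fun j => ((f' j).1, (f' j).2)), ?_, ?_⟩
    · intro i j hij
      induction i using Fin.cases with
      | zero =>
        induction j using Fin.cases with
        | zero => rfl
        | succ j' =>
          exfalso
          simp only [Fin.cons_zero, Fin.cons_succ] at hij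
          exact absurd hij.symm (ne_of_gt (hSmem (f' j').1).1)
      | succ i' =>
        induction j using Fin.cases with
        | zero =>
          exfalso
          simp only [Fin.cons_zero, Fin.cons_succ] at hij
          exact absurd hij (ne_of_gt (hSmem (f' i').1).1)
        | succ j' =>
          simp only [Fin.cons_succ] at hij
          have : (f' i').1 = (f' j').1 := Subtype.ext hij
          have := hf'inj this
          rw [this]
    · intro i j hij
      induction j using Fin.cases with
      | zero => exact absurd hij (by simp)
      | succ j' =>
        induction i using Fin.cases with
        | zero =>
          simp only [Fin.cons_zero, Fin.cons_succ]
          exact ⟨(hSmem (f' j').1).1, (hSmem (f' j').1).2⟩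
        | succ i' =>
          simp only [Fin.cons_succ]
          have hij' : i' < j' := by
            rwa [Fin.succ_lt_succ_iff] at hij
          obtain ⟨hlt, hmem⟩ := hf'adj i' j' hij'
          exact ⟨by exact_mod_cast hlt, hmem⟩

theorem blow_up_of_acyclic_tournament (k : ℕ) (hk : 1 ≤ k)
    (W : Type) [Fintype W] [LinearOrder W]
    (hcard : (3 ^ k - 1) / 2 ≤ Fintype.card W)
    (I : W → W → Finset (Fin 3)) (hI : ∀ v w : W, v < w → (I v w).Nonempty) :
    ∃ f : Fin k → W × Fin 3,
      IsAdmissibleAcyclicTournament (BlowUpAdj (· < ·) I) k f := by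
  exact blow_aux k hk W I hcard hI
end

section
/- For every k ≥ 1, there exists a constant b_k such that for every digraph D on at least b_k vertices, every blow-up of D or every blow-up of the complement of D contains a D-admissible acyclic tournament of order k. -/
/-- Prehomogeneous sequences exist in large enough sets. -/
lemma ramsey_pre (c : ℕ) : ∀ m : ℕ, ∃ n : ℕ, ∀ (χ : ℕ → ℕ → Fin (c+1)) (S : Finset ℕ),
    n ≤ S.card → ∃ (g : Fin m → ℕ) (d : Fin m → Fin (c+1)), StrictMono g ∧ (∀ i, g i ∈ S) ∧
      ∀ i j : Fin m, i < j → χ (g i) (g j) = d i := by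
  intro m
  induction m with
  | zero =>
    exact ⟨0, fun χ S _ => ⟨Fin.elim0, Fin.elim0, fun i => i.elim0, fun i => i.elim0,
      fun i => i.elim0⟩⟩
  | succ m ih =>
    obtain ⟨n, hn⟩ := ih
    refine ⟨(c+1)*n + 1, fun χ S hS => ?_⟩
    have hSne : S.Nonempty := Finset.card_pos.mp (by omega)
    set x := S.min' hSne with hxdef
    have hx : x ∈ S := S.min'_mem _
    have hcard : (c+1)*n ≤ (S.erase x).card := by
      rw [Finset.card_erase_of_mem hx]; omega
    obtain ⟨t, -, ht⟩ := Finset.exists_le_card_fiber_of_mul_le_card_of_maps_to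
      (s := S.erase x) (t := (Finset.univ : Finset (Fin (c+1)))) (f := fun y => χ x y)
      (fun a _ => Finset.mem_univ _) Finset.univ_nonempty (by simpa using hcard)
    obtain ⟨g, d, hmono, hmem, hcol⟩ := hn χ _ ht
    have hmem' : ∀ i, g i ∈ S.erase x ∧ χ x (g i) = t := by
      intro i
      have := hmem i
      simp only [Finset.mem_filter] at this
      exact this
    have hxlt : ∀ i, x < g i := by
      intro i
      have h1 := (hmem' i).1
      have h2 : g i ∈ S := Finset.mem_of_mem_erase h1
      have h3 : g i ≠ x := Finset.ne_of_mem_erase h1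
      exact lt_of_le_of_ne (S.min'_le _ h2) (Ne.symm h3)
    refine ⟨Fin.cons x g, Fin.cons t d, ?_, ?_, ?_⟩
    · intro a b hab
      rcases Fin.eq_zero_or_eq_succ b with rfl | ⟨b', rfl⟩
      · exact absurd hab (Fin.not_lt_zero _)
      · rcases Fin.eq_zero_or_eq_succ a with rfl | ⟨a', rfl⟩
        · simpa using hxlt b'
        · simp only [Fin.cons_succ]
          exact hmono (Fin.succ_lt_succ_iff.mp hab)
    · intro i
      refine Fin.cases ?_ ?_ i
      · simpa using hx
      · intro i'
        simpa using Finset.mem_of_mem_erase (hmem' i').1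
    · intro i j hij
      rcases Fin.eq_zero_or_eq_succ j with rfl | ⟨j', rfl⟩
      · exact absurd hij (Fin.not_lt_zero _)
      · rcases Fin.eq_zero_or_eq_succ i with rfl | ⟨i', rfl⟩
        · simpa using (hmem' j').2
        · simp only [Fin.cons_succ]
          exact hcol i' j' (Fin.succ_lt_succ_iff.mp hij)

/-- Finite Ramsey theorem for pair colorings with `c+1` colors. -/
lemma ramsey_pairs (c k : ℕ) : ∃ n : ℕ, ∀ (χ : ℕ → ℕ → Fin (c+1)) (S : Finset ℕ),
    n ≤ S.card → ∃ (g : Fin k → ℕ) (s : Fin (c+1)), StrictMono g ∧ (∀ i, g i ∈ S) ∧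
      ∀ i j : Fin k, i < j → χ (g i) (g j) = s := by
  obtain ⟨n, hn⟩ := ramsey_pre c ((c+1)*k)
  refine ⟨n, fun χ S hS => ?_⟩
  obtain ⟨g, d, hmono, hmem, hcol⟩ := hn χ S hS
  obtain ⟨s, -, hs⟩ := Finset.exists_le_card_fiber_of_mul_le_card_of_maps_to
    (s := (Finset.univ : Finset (Fin ((c+1)*k)))) (t := (Finset.univ : Finset (Fin (c+1))))
    (f := d) (n := k) (fun a _ => Finset.mem_univ _) Finset.univ_nonempty (by simp [mul_comm])
  obtain ⟨T, hTsub, hTcard⟩ := Finset.exists_subset_card_eq hs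
  have hT : ∀ i ∈ T, d i = s := by
    intro i hi
    have := hTsub hi
    simp only [Finset.mem_filter] at this
    exact this.2
  refine ⟨fun i => g (T.orderEmbOfFin hTcard i), s, ?_, fun i => hmem _, ?_⟩
  · intro a b hab
    exact hmono ((T.orderEmbOfFin hTcard).strictMono hab)
  · intro i j hij
    rw [hcol _ _ ((T.orderEmbOfFin hTcard).strictMono hij)]
    exact hT _ (T.orderEmbOfFin_mem hTcard i)

/-- From a large transitive set for `R`, every blow-up of `R` contains an admissible
acyclic tournament. -/
lemma blowup_helper {W : Type} (R : W → W → Prop) (k n : ℕ)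
    (hn : ∀ (χ : ℕ → ℕ → Fin 3) (S : Finset ℕ), n ≤ S.card →
      ∃ (g : Fin k → ℕ) (s : Fin 3), StrictMono g ∧ (∀ i, g i ∈ S) ∧
        ∀ i j : Fin k, i < j → χ (g i) (g j) = s)
    (v : ℕ → W) (S : Finset ℕ) (hcard : n ≤ S.card)
    (hinj : ∀ x ∈ S, ∀ y ∈ S, x < y → v x ≠ v y)
    (hR : ∀ x ∈ S, ∀ y ∈ S, x < y → R (v x) (v y))
    (I : W → W → Finset (Fin 3)) (hI : ∀ a b, R a b → (I a b).Nonempty) :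
    ∃ f : Fin k → W × Fin 3, IsAdmissibleAcyclicTournament (BlowUpAdj R I) k f := by
  classical
  set χ : ℕ → ℕ → Fin 3 := fun x y =>
    if h : (I (v x) (v y)).Nonempty then h.choose else 0 with hχ
  obtain ⟨g, s, hmono, hmem, hcol⟩ := hn χ S hcard
  refine ⟨fun i => (v (g i), s), ?_, ?_⟩
  · intro i j hvij
    simp only at hvij
    by_contra hij
    rcases lt_or_gt_of_ne hij with h | h
    · exact hinj _ (hmem i) _ (hmem j) (hmono h) hvij
    · exact hinj _ (hmem j) _ (hmem i) (hmono h) hvij.symm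
  · intro i j hij
    have hgij : g i < g j := hmono hij
    have hR' := hR _ (hmem i) _ (hmem j) hgij
    have hne := hI _ _ hR'
    refine ⟨hR', ?_⟩
    have hc := hcol i j hij
    rw [hχ] at hc
    simp only [dif_pos hne] at hc
    rw [← hc]
    exact hne.choose_spec

theorem blow_up_ramsey (k : ℕ) (hk : 1 ≤ k) :
    ∃ b : ℕ, ∀ (W : Type) [Fintype W] (D : W → W → Prop),
      b ≤ Fintype.card W →
        (∀ I : W → W → Finset (Fin 3), (∀ v w, D v w → (I v w).Nonempty) →
          ∃ f : Fin k → W × Fin 3,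
            IsAdmissibleAcyclicTournament (BlowUpAdj D I) k f) ∨
        (∀ I : W → W → Finset (Fin 3),
          (∀ v w, (v ≠ w ∧ ¬ D v w) → (I v w).Nonempty) →
          ∃ f : Fin k → W × Fin 3,
            IsAdmissibleAcyclicTournament
              (BlowUpAdj (fun x y => x ≠ y ∧ ¬ D x y) I) k f) := by
  classical
  obtain ⟨n3, h3⟩ := ramsey_pairs 2 k
  obtain ⟨n2, h2⟩ := ramsey_pairs 1 n3
  refine ⟨max n2 1, ?_⟩
  intro W _ D hb
  set N := Fintype.card W with hN
  have hNpos : 0 < N := by omega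
  set e := Fintype.equivFin W with he
  set v : ℕ → W := fun i => e.symm ⟨min i (N-1), by omega⟩ with hv
  have hvinj : ∀ x y : ℕ, x < N → y < N → x ≠ y → v x ≠ v y := by
    intro x y hx hy hxy hveq
    apply hxy
    have := e.symm.injective hveq
    have h1 : min x (N-1) = x := by omega
    have h2 : min y (N-1) = y := by omega
    have := congrArg Fin.val this
    simp only [h1, h2] at this
    exact this
  set χ2 : ℕ → ℕ → Fin 2 := fun x y => if D (v x) (v y) then 0 else 1 with hχ2
  obtain ⟨g, s, hmono, hmem, hcol⟩ := h2 χ2 (Finset.range N)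
    (by rw [Finset.card_range]; omega)
  set S' : Finset ℕ := Finset.image g Finset.univ with hS'
  have hcardS' : n3 ≤ S'.card := by
    rw [hS', Finset.card_image_of_injective _ hmono.injective, Finset.card_univ,
      Fintype.card_fin]
  have hSN : ∀ x ∈ S', x < N := by
    intro x hx
    rw [hS'] at hx
    obtain ⟨a, -, rfl⟩ := Finset.mem_image.mp hx
    exact Finset.mem_range.mp (hmem a)
  have hScol : ∀ x ∈ S', ∀ y ∈ S', x < y → χ2 x y = s := by
    intro x hx y hy hxy
    rw [hS'] at hx hy
    obtain ⟨a, -, rfl⟩ := Finset.mem_image.mp hx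
    obtain ⟨b, -, rfl⟩ := Finset.mem_image.mp hy
    exact hcol a b (hmono.lt_iff_lt.mp hxy)
  have hSinj : ∀ x ∈ S', ∀ y ∈ S', x < y → v x ≠ v y :=
    fun x hx y hy hxy => hvinj x y (hSN x hx) (hSN y hy) (Nat.ne_of_lt hxy)
  by_cases hs : s = 0
  · left
    intro I hI
    refine blowup_helper D k n3 h3 v S' hcardS' hSinj ?_ I hI
    intro x hx y hy hxy
    have := hScol x hx y hy hxy
    rw [hχ2, hs] at this
    by_contra hD
    simp only [if_neg hD] at this
    exact absurd this (by decide)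
  · right
    intro I hI
    refine blowup_helper _ k n3 h3 v S' hcardS' hSinj ?_ I hI
    intro x hx y hy hxy
    have hcol' := hScol x hx y hy hxy
    rw [hχ2] at hcol'
    refine ⟨hSinj x hx y hy hxy, ?_⟩
    intro hD
    simp only [if_pos hD] at hcol'
    exact hs hcol'.symm
end

section
/- If G is a connected α-critical graph with at least three vertices and G' is an elementary odd subdivision of G obtained by replacing an edge with a path of length 3, then G' is again α-critical and has the same defect |V| - 2α as G. -/
open Finset

open Classical in
noncomputable def alphaNat {V : Type} [Fintype V] (G : SimpleGraph V) : ℕ :=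
  Finset.univ.sup fun S : Finset V => if IsStable G S then S.card else 0

def AlphaCritical {V : Type} [Fintype V] (G : SimpleGraph V) : Prop :=
  ∀ e ∈ G.edgeSet, alphaNat G < alphaNat (G.deleteEdges {e})

/-- Replace the edge `uv` of `G` by a path `u — x — y — v` of length 3,
where `x = Sum.inr 0` and `y = Sum.inr 1` are two new vertices. -/
def subdiv3 {V : Type} (G : SimpleGraph V) (u v : V) : SimpleGraph (V ⊕ Fin 2) :=
  SimpleGraph.fromRel (fun p q =>
    (∃ a b : V, p = Sum.inl a ∧ q = Sum.inl b ∧ G.Adj a b ∧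
        ¬(a = u ∧ b = v) ∧ ¬(a = v ∧ b = u)) ∨
    (p = Sum.inl u ∧ q = Sum.inr 0) ∨
    (p = Sum.inr 0 ∧ q = Sum.inr 1) ∨
    (p = Sum.inr 1 ∧ q = Sum.inl v))

section Adj

variable {V : Type} {G : SimpleGraph V} {u v a b : V} {i j : Fin 2}

lemma adj_inl_inl : (subdiv3 G u v).Adj (Sum.inl a) (Sum.inl b) ↔
    G.Adj a b ∧ ¬(a = u ∧ b = v) ∧ ¬(a = v ∧ b = u) := by
  constructor
  · rintro ⟨hne, h | h⟩ <;>
      rcases h with ⟨a', b', ha, hb, h1, h2, h3⟩ | ⟨h1, h2⟩ | ⟨h1, h2⟩ | ⟨h1, h2⟩ <;>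
      simp_all <;> exact ⟨h1.symm, fun x y => h3 y x, fun x y => h2 y x⟩
  · rintro ⟨h1, h2, h3⟩
    exact ⟨by simpa using h1.ne, Or.inl (Or.inl ⟨a, b, rfl, rfl, h1, h2, h3⟩)⟩

lemma adj_inl_inr : (subdiv3 G u v).Adj (Sum.inl a) (Sum.inr i) ↔
    (a = u ∧ i = 0) ∨ (a = v ∧ i = 1) := by
  constructor
  · rintro ⟨hne, h | h⟩ <;>
      rcases h with ⟨a', b', ha, hb, h1, h2, h3⟩ | ⟨h1, h2⟩ | ⟨h1, h2⟩ | ⟨h1, h2⟩ <;> simp_all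
  · rintro (⟨ha, hi⟩ | ⟨ha, hi⟩) <;> subst ha <;> subst hi <;>
      exact ⟨by simp, by tauto⟩

lemma adj_inr_inr : (subdiv3 G u v).Adj (Sum.inr i) (Sum.inr j) ↔
    (i = 0 ∧ j = 1) ∨ (i = 1 ∧ j = 0) := by
  constructor
  · rintro ⟨hne, h | h⟩ <;>
      rcases h with ⟨a', b', ha, hb, h1, h2, h3⟩ | ⟨h1, h2⟩ | ⟨h1, h2⟩ | ⟨h1, h2⟩ <;> simp_all
  · rintro (⟨h1, h2⟩ | ⟨h1, h2⟩) <;> subst h1 <;> subst h2 <;>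
      exact ⟨by simp, by tauto⟩

lemma adj_inr_inl : (subdiv3 G u v).Adj (Sum.inr i) (Sum.inl a) ↔
    (a = u ∧ i = 0) ∨ (a = v ∧ i = 1) := by
  rw [SimpleGraph.adj_comm]; exact adj_inl_inr

end Adj

set_option linter.unusedSectionVars false

variable {V : Type} [Fintype V] [DecidableEq V] {G : SimpleGraph V} {u v a b : V}

lemma isStable_le_alpha (G : SimpleGraph V) {S : Finset V} (h : IsStable G S) :
    S.card ≤ alphaNat G := by
  classical
  have := Finset.le_sup (f := fun S : Finset V => if IsStable G S then S.card else 0)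
    (Finset.mem_univ S)
  rw [alphaNat]
  simpa [if_pos h] using this

lemma alpha_le (G : SimpleGraph V) (n : ℕ) (h : ∀ S, IsStable G S → S.card ≤ n) :
    alphaNat G ≤ n := by
  classical
  refine Finset.sup_le fun S _ => ?_
  by_cases hS : IsStable G S
  · rw [if_pos hS]; exact h S hS
  · rw [if_neg hS]; exact Nat.zero_le n

lemma exists_max_stable (G : SimpleGraph V) :
    ∃ S : Finset V, IsStable G S ∧ S.card = alphaNat G := by
  classical
  obtain ⟨S, -, hS⟩ := Finset.exists_mem_eq_sup (Finset.univ : Finset (Finset V))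
    Finset.univ_nonempty (fun S : Finset V => if IsStable G S then S.card else 0)
  by_cases h : IsStable G S
  · exact ⟨S, h, by rw [alphaNat, hS, if_pos h]⟩
  · refine ⟨∅, by intro a ha; simp at ha, ?_⟩
    rw [alphaNat, hS, if_neg h]; simp


lemma sym2_mem_single {p q c d : V} (h : s(p, q) ∈ ({s(c, d)} : Set (Sym2 V))) :
    (p = c ∧ q = d) ∨ (p = d ∧ q = c) := by
  simpa [Sym2.eq_iff] using h

/-- From criticality: for any edge ab, there is a stable set of `G - ab` of size
`α+1` containing both `a` and `b`. -/
lemma crit_edge (hG : AlphaCritical G) (hab : G.Adj a b) :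
    ∃ T : Finset V, IsStable (G.deleteEdges {s(a, b)}) T ∧
      alphaNat G + 1 ≤ T.card ∧ a ∈ T ∧ b ∈ T := by
  have he : s(a, b) ∈ G.edgeSet := hab
  have hlt := hG _ he
  obtain ⟨T, hT, hTc⟩ := exists_max_stable (G.deleteEdges {s(a, b)})
  have hcard : alphaNat G + 1 ≤ T.card := by omega
  have key : ¬ (a ∈ T ∧ b ∈ T) → False := by
    intro hm
    have hstab : IsStable G T := by
      intro p hp q hq hpq
      refine hT p hp q hq ?_
      rw [SimpleGraph.deleteEdges_adj]
      refine ⟨hpq, fun hmem => ?_⟩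
      rcases sym2_mem_single hmem with ⟨h1, h2⟩ | ⟨h1, h2⟩
      · exact hm ⟨h1 ▸ hp, h2 ▸ hq⟩
      · exact hm ⟨h2 ▸ hq, h1 ▸ hp⟩
    have := isStable_le_alpha G hstab
    omega
  by_cases hab' : a ∈ T ∧ b ∈ T
  · exact ⟨T, hT, hcard, hab'.1, hab'.2⟩
  · exact absurd (key hab') not_false

lemma stable_of_del_erase {c d : V} {T : Finset V}
    (hT : IsStable (G.deleteEdges {s(c, d)}) T) : IsStable G (T.erase c) := by
  intro p hp q hq hpq
  refine hT p (Finset.mem_of_mem_erase hp) q (Finset.mem_of_mem_erase hq) ?_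
  rw [SimpleGraph.deleteEdges_adj]
  refine ⟨hpq, fun hmem => ?_⟩
  rcases sym2_mem_single hmem with ⟨h1, h2⟩ | ⟨h1, h2⟩
  · exact Finset.ne_of_mem_erase hp h1
  · exact Finset.ne_of_mem_erase hq h2

/-- `u` has a neighbor besides `v`. -/
lemma exists_other_neighbor (hconn : G.Connected) (hcard : 3 ≤ Fintype.card V)
    (huv : G.Adj u v) (hG : AlphaCritical G) : ∃ w, G.Adj u w ∧ w ≠ v := by
  by_contra hno
  push_neg at hno
  have hunbr : ∀ w, G.Adj u w → w = v := fun w hw => hno w hw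
  -- v has a neighbor b ≠ u
  have hvnbr : ∃ b, G.Adj v b ∧ b ≠ u := by
    by_contra hno2
    push_neg at hno2
    have hv : ∀ w, G.Adj v w → w = u := fun w hw => hno2 w hw
    obtain ⟨z, hzu, hzv⟩ : ∃ z : V, z ≠ u ∧ z ≠ v := by
      have hss : ({u, v} : Finset V) ⊂ Finset.univ := by
        refine Finset.ssubset_univ_iff.mpr ?_
        intro h
        have hle := Finset.card_le_card h.ge
        simp only [Finset.card_univ] at hle
        have h2 : ({u, v} : Finset V).card ≤ 2 :=
          (Finset.card_insert_le _ _).trans (by simp)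
        omega
      obtain ⟨z, -, hz⟩ := Finset.exists_of_ssubset hss
      simp only [Finset.mem_insert, Finset.mem_singleton, not_or] at hz
      exact ⟨z, hz.1, hz.2⟩
    obtain ⟨p⟩ := hconn.preconnected u z
    have key : ∀ {c d : V} (_ : G.Walk c d), (c = u ∨ c = v) → (d = u ∨ d = v) := by
      intro c d p
      induction p with
      | nil => exact id
      | cons h q ih =>
        intro hc
        apply ih
        rcases hc with rfl | rfl
        · exact Or.inr (hunbr _ h)
        · exact Or.inl (hv _ h)
    rcases key p (Or.inl rfl) with h | h
    · exact hzu h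
    · exact hzv h
  obtain ⟨b, hvb, hbu⟩ := hvnbr
  obtain ⟨T, hT, hTc, hvT, hbT⟩ := crit_edge hG hvb
  have huT : u ∉ T := by
    intro huT
    refine hT u huT v hvT ?_
    rw [SimpleGraph.deleteEdges_adj]
    refine ⟨huv, fun hmem => ?_⟩
    rcases sym2_mem_single hmem with ⟨h1, h2⟩ | ⟨h1, h2⟩
    · exact G.ne_of_adj huv h1
    · exact hbu h1.symm
  have hstab : IsStable G (insert u (T.erase v)) := by
    intro p hp q hq hpq
    simp only [Finset.mem_insert] at hp hq
    have herase := stable_of_del_erase hT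
    rcases hp with rfl | hp <;> rcases hq with rfl | hq
    · exact G.loopless.irrefl _ hpq
    · exact (Finset.ne_of_mem_erase hq) (hunbr _ hpq)
    · exact (Finset.ne_of_mem_erase hp) (hunbr _ hpq.symm)
    · exact herase p hp q hq hpq
  have hcard2 : (insert u (T.erase v)).card = T.card := by
    rw [Finset.card_insert_of_notMem (fun h => huT (Finset.mem_of_mem_erase h)),
      Finset.card_erase_of_mem hvT]
    have : 1 ≤ T.card := Finset.card_pos.mpr ⟨v, hvT⟩
    omega
  have := isStable_le_alpha G hstab
  omega

/-- There is a stable set of size `α` avoiding both `u` and `v`. -/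
lemma exists_stable_avoid (hconn : G.Connected) (hcard : 3 ≤ Fintype.card V)
    (huv : G.Adj u v) (hG : AlphaCritical G) :
    ∃ S : Finset V, IsStable G S ∧ alphaNat G ≤ S.card ∧ u ∉ S ∧ v ∉ S := by
  obtain ⟨w, huw, hwv⟩ := exists_other_neighbor hconn hcard huv hG
  obtain ⟨T, hT, hTc, huT, hwT⟩ := crit_edge hG huw
  have hvT : v ∉ T := by
    intro hvT
    refine hT u huT v hvT ?_
    rw [SimpleGraph.deleteEdges_adj]
    refine ⟨huv, fun hmem => ?_⟩
    rcases sym2_mem_single hmem with ⟨h1, h2⟩ | ⟨h1, h2⟩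
    · exact hwv h2.symm
    · exact G.ne_of_adj huv h2.symm
  refine ⟨T.erase u, stable_of_del_erase hT, ?_, Finset.notMem_erase u T,
    fun h => hvT (Finset.mem_of_mem_erase h)⟩
  rw [Finset.card_erase_of_mem huT]
  omega


section Gprime

variable {V : Type} [Fintype V] [DecidableEq V] {G : SimpleGraph V} {u v a b : V}

/-- cardinality of a lifted set plus one extra new vertex -/
lemma card_lift_one (T : Finset V) (i : Fin 2) :
    (T.image Sum.inl ∪ {(Sum.inr i : V ⊕ Fin 2)}).card = T.card + 1 := by
  rw [Finset.card_union_of_disjoint, Finset.card_image_of_injective _ Sum.inl_injective,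
    Finset.card_singleton]
  simp [Finset.disjoint_left]

lemma card_lift_two (T : Finset V) :
    (T.image Sum.inl ∪ ({Sum.inr 0, Sum.inr 1} : Finset (V ⊕ Fin 2))).card = T.card + 2 := by
  rw [Finset.card_union_of_disjoint, Finset.card_image_of_injective _ Sum.inl_injective]
  · simp
  · simp [Finset.disjoint_left]

lemma alpha_subdiv_le (huv : G.Adj u v) :
    alphaNat (subdiv3 G u v) ≤ alphaNat G + 1 := by
  refine alpha_le _ _ fun S' hS' => ?_
  set A : Finset V := Finset.univ.filter (fun a => Sum.inl a ∈ S') with hA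
  have hmemA : ∀ a : V, a ∈ A ↔ Sum.inl a ∈ S' := by
    intro a; simp [hA]
  have hnotboth : ¬((Sum.inr 0 : V ⊕ Fin 2) ∈ S' ∧ (Sum.inr 1 : V ⊕ Fin 2) ∈ S') := by
    rintro ⟨h0, h1⟩
    exact hS' _ h0 _ h1 (adj_inr_inr.mpr (Or.inl ⟨rfl, rfl⟩))
  by_cases hstab : IsStable G A
  · -- S' ⊆ lift A ∪ one extra
    have hAle : A.card ≤ alphaNat G := isStable_le_alpha G hstab
    have hsub : S' ⊆ A.image Sum.inl ∪ ({Sum.inr 0, Sum.inr 1} : Finset (V ⊕ Fin 2)) := by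
      intro p hp
      rcases p with a | i
      · exact Finset.mem_union_left _ (Finset.mem_image_of_mem _ ((hmemA a).mpr hp))
      · apply Finset.mem_union_right
        fin_cases i <;> simp
    have hone : ∃ i : Fin 2, S' ⊆ A.image Sum.inl ∪ {(Sum.inr i : V ⊕ Fin 2)} := by
      by_cases h0 : (Sum.inr 0 : V ⊕ Fin 2) ∈ S'
      · refine ⟨0, fun p hp => ?_⟩
        have := hsub hp
        simp only [Finset.mem_union, Finset.mem_insert, Finset.mem_singleton] at this ⊢
        rcases this with h | h | h
        · exact Or.inl h
        · exact Or.inr h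
        · exact absurd ⟨h0, h ▸ hp⟩ hnotboth
      · refine ⟨1, fun p hp => ?_⟩
        have := hsub hp
        simp only [Finset.mem_union, Finset.mem_insert, Finset.mem_singleton] at this ⊢
        rcases this with h | h | h
        · exact Or.inl h
        · exact absurd (h ▸ hp) h0
        · exact Or.inr h
    obtain ⟨i, hi⟩ := hone
    calc S'.card ≤ (A.image Sum.inl ∪ {(Sum.inr i : V ⊕ Fin 2)}).card := Finset.card_le_card hi
    _ = A.card + 1 := card_lift_one A i
    _ ≤ alphaNat G + 1 := by omega
  · -- A contains u and v, and S' contains no new vertices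
    have huvA : u ∈ A ∧ v ∈ A := by
      simp only [IsStable, not_forall] at hstab
      obtain ⟨p, hp, q, hq, hpq⟩ := hstab
      rw [not_not] at hpq
      have : ¬ (subdiv3 G u v).Adj (Sum.inl p) (Sum.inl q) :=
        hS' _ ((hmemA p).mp hp) _ ((hmemA q).mp hq)
      have hor : (p = u ∧ q = v) ∨ (p = v ∧ q = u) := by
        rw [adj_inl_inl] at this; tauto
      rcases hor with ⟨rfl, rfl⟩ | ⟨rfl, rfl⟩
      · exact ⟨hp, hq⟩
      · exact ⟨hq, hp⟩
    have hx : (Sum.inr 0 : V ⊕ Fin 2) ∉ S' := fun h =>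
      hS' _ ((hmemA u).mp huvA.1) _ h (adj_inl_inr.mpr (Or.inl ⟨rfl, rfl⟩))
    have hy : (Sum.inr 1 : V ⊕ Fin 2) ∉ S' := fun h =>
      hS' _ ((hmemA v).mp huvA.2) _ h (adj_inl_inr.mpr (Or.inr ⟨rfl, rfl⟩))
    have hsub : S' ⊆ A.image Sum.inl := by
      intro p hp
      rcases p with a | i
      · exact Finset.mem_image_of_mem _ ((hmemA a).mpr hp)
      · exfalso; fin_cases i
        · exact hx hp
        · exact hy hp
    have hstab2 : IsStable G (A.erase u) := by
      intro p hp q hq hpq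
      have hpu := Finset.ne_of_mem_erase hp
      have hqu := Finset.ne_of_mem_erase hq
      have : ¬ (subdiv3 G u v).Adj (Sum.inl p) (Sum.inl q) :=
        hS' _ ((hmemA p).mp (Finset.mem_of_mem_erase hp)) _
          ((hmemA q).mp (Finset.mem_of_mem_erase hq))
      have hor : (p = u ∧ q = v) ∨ (p = v ∧ q = u) := by
        rw [adj_inl_inl] at this; tauto
      rcases hor with ⟨rfl, rfl⟩ | ⟨rfl, rfl⟩
      · exact hpu rfl
      · exact hqu rfl
    have h1 : (A.erase u).card ≤ alphaNat G := isStable_le_alpha G hstab2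
    have h2 : A.card ≤ (A.erase u).card + 1 := by
      rw [Finset.card_erase_of_mem huvA.1]; omega
    calc S'.card ≤ (A.image Sum.inl).card := Finset.card_le_card hsub
    _ = A.card := Finset.card_image_of_injective _ Sum.inl_injective
    _ ≤ alphaNat G + 1 := by omega

lemma alpha_subdiv_ge (huv : G.Adj u v) :
    alphaNat G + 1 ≤ alphaNat (subdiv3 G u v) := by
  obtain ⟨S, hS, hSc⟩ := exists_max_stable G
  by_cases huS : u ∈ S
  · have hvS : v ∉ S := fun hvS => hS u huS v hvS huv
    have hstab : IsStable (subdiv3 G u v) (S.image Sum.inl ∪ {Sum.inr 1}) := by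
      intro p hp q hq hpq
      simp only [Finset.mem_union, Finset.mem_image, Finset.mem_singleton] at hp hq
      rcases hp with ⟨a, ha, rfl⟩ | rfl <;> rcases hq with ⟨c, hc, rfl⟩ | rfl
      · exact hS a ha c hc (adj_inl_inl.mp hpq).1
      · rcases adj_inl_inr.mp hpq with ⟨rfl, h⟩ | ⟨rfl, h⟩
        · exact absurd h (by decide)
        · exact hvS ha
      · rcases adj_inr_inl.mp hpq with ⟨rfl, h⟩ | ⟨rfl, h⟩
        · exact absurd h (by decide)
        · exact hvS hc
      · exact (subdiv3 G u v).loopless.irrefl _ hpq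
    have := isStable_le_alpha _ hstab
    rw [card_lift_one] at this
    omega
  · have hstab : IsStable (subdiv3 G u v) (S.image Sum.inl ∪ {Sum.inr 0}) := by
      intro p hp q hq hpq
      simp only [Finset.mem_union, Finset.mem_image, Finset.mem_singleton] at hp hq
      rcases hp with ⟨a, ha, rfl⟩ | rfl <;> rcases hq with ⟨c, hc, rfl⟩ | rfl
      · exact hS a ha c hc (adj_inl_inl.mp hpq).1
      · rcases adj_inl_inr.mp hpq with ⟨rfl, h⟩ | ⟨rfl, h⟩
        · exact huS ha
        · exact absurd h (by decide)
      · rcases adj_inr_inl.mp hpq with ⟨rfl, h⟩ | ⟨rfl, h⟩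
        · exact huS hc
        · exact absurd h (by decide)
      · exact (subdiv3 G u v).loopless.irrefl _ hpq
    have := isStable_le_alpha _ hstab
    rw [card_lift_one] at this
    omega


lemma stable_lift_del {e : Sym2 (V ⊕ Fin 2)} {T : Finset V} {i : Fin 2}
    (hpairs : ∀ p ∈ T, ∀ q ∈ T, (subdiv3 G u v).Adj (Sum.inl p) (Sum.inl q) →
        s(Sum.inl p, Sum.inl q) = e)
    (hnew : ∀ p ∈ T, (subdiv3 G u v).Adj (Sum.inl p) (Sum.inr i) →
        s((Sum.inl p : V ⊕ Fin 2), Sum.inr i) = e) :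
    IsStable ((subdiv3 G u v).deleteEdges {e}) (T.image Sum.inl ∪ {Sum.inr i}) := by
  intro p hp q hq hadj
  rw [SimpleGraph.deleteEdges_adj] at hadj
  obtain ⟨hadj, hne⟩ := hadj
  simp only [Finset.mem_union, Finset.mem_image, Finset.mem_singleton] at hp hq
  rcases hp with ⟨c, hc, rfl⟩ | rfl <;> rcases hq with ⟨d, hd, rfl⟩ | rfl
  · exact hne (Set.mem_singleton_iff.mpr (hpairs c hc d hd hadj))
  · exact hne (Set.mem_singleton_iff.mpr (hnew c hc hadj))
  · exact hne (Set.mem_singleton_iff.mpr (Sym2.eq_swap.trans (hnew d hd hadj.symm)))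
  · exact (subdiv3 G u v).loopless.irrefl _ hadj

lemma case_orig (hG : AlphaCritical G) (huv : G.Adj u v) (hab : G.Adj a b)
    (h1 : ¬(a = u ∧ b = v)) (h2 : ¬(a = v ∧ b = u)) :
    alphaNat G + 2 ≤ alphaNat ((subdiv3 G u v).deleteEdges {s(Sum.inl a, Sum.inl b)}) := by
  obtain ⟨T, hT, hTc, haT, hbT⟩ := crit_edge hG hab
  have hpairs : ∀ p ∈ T, ∀ q ∈ T, (subdiv3 G u v).Adj (Sum.inl p) (Sum.inl q) →
      s((Sum.inl p : V ⊕ Fin 2), Sum.inl q) = s(Sum.inl a, Sum.inl b) := by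
    intro p hp q hq hadj
    have hGadj := (adj_inl_inl.mp hadj).1
    have hdel : ¬ (G.deleteEdges {s(a, b)}).Adj p q := hT p hp q hq
    rw [SimpleGraph.deleteEdges_adj] at hdel
    push_neg at hdel
    rcases sym2_mem_single (hdel hGadj) with ⟨rfl, rfl⟩ | ⟨rfl, rfl⟩
    · rfl
    · exact Sym2.eq_swap
  have hnotboth : ¬ (u ∈ T ∧ v ∈ T) := by
    rintro ⟨huT, hvT⟩
    refine hT u huT v hvT ?_
    rw [SimpleGraph.deleteEdges_adj]
    refine ⟨huv, fun hmem => ?_⟩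
    rcases sym2_mem_single hmem with ⟨hu1, hv1⟩ | ⟨hu1, hv1⟩
    · exact h1 ⟨hu1.symm, hv1.symm⟩
    · exact h2 ⟨hv1.symm, hu1.symm⟩
  by_cases huT : u ∈ T
  · have hvT : v ∉ T := fun h => hnotboth ⟨huT, h⟩
    have hstab := stable_lift_del (u := u) (v := v) (i := 1) hpairs (by
      intro p hp hadj
      exfalso
      rcases adj_inl_inr.mp hadj with ⟨rfl, h⟩ | ⟨rfl, h⟩
      · exact absurd h (by decide)
      · exact hvT hp)
    have := isStable_le_alpha _ hstab
    rw [card_lift_one] at this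
    omega
  · have hstab := stable_lift_del (u := u) (v := v) (i := 0) hpairs (by
      intro p hp hadj
      exfalso
      rcases adj_inl_inr.mp hadj with ⟨rfl, h⟩ | ⟨rfl, h⟩
      · exact huT hp
      · exact absurd h (by decide))
    have := isStable_le_alpha _ hstab
    rw [card_lift_one] at this
    omega

lemma no_lift_adj {T : Finset V} (hT : IsStable (G.deleteEdges {s(u, v)}) T) :
    ∀ p ∈ T, ∀ q ∈ T, ¬ (subdiv3 G u v).Adj (Sum.inl p) (Sum.inl q) := by
  intro p hp q hq hadj
  obtain ⟨hGadj, hn1, hn2⟩ := adj_inl_inl.mp hadj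
  have hdel : ¬ (G.deleteEdges {s(u, v)}).Adj p q := hT p hp q hq
  rw [SimpleGraph.deleteEdges_adj] at hdel
  push_neg at hdel
  rcases sym2_mem_single (hdel hGadj) with ⟨h1, h2⟩ | ⟨h1, h2⟩
  · exact hn1 ⟨h1, h2⟩
  · exact hn2 ⟨h1, h2⟩

lemma case_ux (hG : AlphaCritical G) (huv : G.Adj u v) :
    alphaNat G + 2 ≤ alphaNat ((subdiv3 G u v).deleteEdges
      {s((Sum.inl u : V ⊕ Fin 2), Sum.inr 0)}) := by
  obtain ⟨T, hT, hTc, huT, hvT⟩ := crit_edge hG huv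
  have hstab := stable_lift_del (u := u) (v := v) (i := 0)
    (T := T) (e := s((Sum.inl u : V ⊕ Fin 2), Sum.inr 0))
    (fun p hp q hq hadj => absurd hadj (no_lift_adj hT p hp q hq))
    (by
      intro p hp hadj
      rcases adj_inl_inr.mp hadj with ⟨rfl, _⟩ | ⟨rfl, h⟩
      · rfl
      · exact absurd h (by decide))
  have := isStable_le_alpha _ hstab
  rw [card_lift_one] at this
  omega

lemma case_vy (hG : AlphaCritical G) (huv : G.Adj u v) :
    alphaNat G + 2 ≤ alphaNat ((subdiv3 G u v).deleteEdges
      {s((Sum.inl v : V ⊕ Fin 2), Sum.inr 1)}) := by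
  obtain ⟨T, hT, hTc, huT, hvT⟩ := crit_edge hG huv
  have hstab := stable_lift_del (u := u) (v := v) (i := 1)
    (T := T) (e := s((Sum.inl v : V ⊕ Fin 2), Sum.inr 1))
    (fun p hp q hq hadj => absurd hadj (no_lift_adj hT p hp q hq))
    (by
      intro p hp hadj
      rcases adj_inl_inr.mp hadj with ⟨rfl, h⟩ | ⟨rfl, _⟩
      · exact absurd h (by decide)
      · rfl)
  have := isStable_le_alpha _ hstab
  rw [card_lift_one] at this
  omega

lemma case_xy (hconn : G.Connected) (hcard : 3 ≤ Fintype.card V)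
    (huv : G.Adj u v) (hG : AlphaCritical G) :
    alphaNat G + 2 ≤ alphaNat ((subdiv3 G u v).deleteEdges
      {s((Sum.inr 0 : V ⊕ Fin 2), Sum.inr 1)}) := by
  obtain ⟨S, hS, hSc, huS, hvS⟩ := exists_stable_avoid hconn hcard huv hG
  have hstab : IsStable ((subdiv3 G u v).deleteEdges {s((Sum.inr 0 : V ⊕ Fin 2), Sum.inr 1)})
      (S.image Sum.inl ∪ ({Sum.inr 0, Sum.inr 1} : Finset (V ⊕ Fin 2))) := by
    intro p hp q hq hadj
    rw [SimpleGraph.deleteEdges_adj] at hadj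
    obtain ⟨hadj, hne⟩ := hadj
    simp only [Finset.mem_union, Finset.mem_image, Finset.mem_insert,
      Finset.mem_singleton] at hp hq
    rcases hp with ⟨c, hc, rfl⟩ | rfl | rfl <;> rcases hq with ⟨d, hd, rfl⟩ | rfl | rfl
    · exact hS c hc d hd (adj_inl_inl.mp hadj).1
    · rcases adj_inl_inr.mp hadj with ⟨rfl, _⟩ | ⟨rfl, h⟩
      · exact huS hc
      · exact absurd h (by decide)
    · rcases adj_inl_inr.mp hadj with ⟨rfl, h⟩ | ⟨rfl, _⟩
      · exact absurd h (by decide)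
      · exact hvS hc
    · rcases adj_inr_inl.mp hadj with ⟨rfl, _⟩ | ⟨rfl, h⟩
      · exact huS hd
      · exact absurd h (by decide)
    · exact (subdiv3 G u v).loopless.irrefl _ hadj
    · exact hne rfl
    · rcases adj_inr_inl.mp hadj with ⟨rfl, h⟩ | ⟨rfl, _⟩
      · exact absurd h (by decide)
      · exact hvS hd
    · exact hne (Set.mem_singleton_iff.mpr Sym2.eq_swap)
    · exact (subdiv3 G u v).loopless.irrefl _ hadj
  have := isStable_le_alpha _ hstab
  rw [card_lift_two] at this
  omega


end Gprime

theorem subdiv3_critical {V : Type} [Fintype V] (G : SimpleGraph V) (u v : V)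
    (hconn : G.Connected) (hcard : 3 ≤ Fintype.card V)
    (huv : G.Adj u v) (hG : AlphaCritical G) :
    AlphaCritical (subdiv3 G u v) ∧
      (Fintype.card (V ⊕ Fin 2) : ℤ) - 2 * alphaNat (subdiv3 G u v) =
        (Fintype.card V : ℤ) - 2 * alphaNat G := by
  classical
  have halpha : alphaNat (subdiv3 G u v) = alphaNat G + 1 :=
    le_antisymm (alpha_subdiv_le huv) (alpha_subdiv_ge huv)
  constructor
  · intro e he
    induction e using Sym2.ind with
    | _ p q =>
      rw [SimpleGraph.mem_edgeSet] at he
      rcases p with a | i <;> rcases q with b | j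
      · obtain ⟨hab, h1, h2⟩ := adj_inl_inl.mp he
        have := case_orig hG huv hab h1 h2
        omega
      · rcases adj_inl_inr.mp he with ⟨rfl, rfl⟩ | ⟨rfl, rfl⟩
        · have := case_ux hG huv
          omega
        · have := case_vy hG huv
          omega
      · rcases adj_inr_inl.mp he with ⟨rfl, rfl⟩ | ⟨rfl, rfl⟩
        · rw [Sym2.eq_swap]
          have := case_ux hG huv
          omega
        · rw [Sym2.eq_swap]
          have := case_vy hG huv
          omega
      · rcases adj_inr_inr.mp he with ⟨rfl, rfl⟩ | ⟨rfl, rfl⟩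
        · have := case_xy hconn hcard huv hG
          omega
        · rw [Sym2.eq_swap]
          have := case_xy hconn hcard huv hG
          omega
  · rw [halpha]
    simp only [Fintype.card_sum, Fintype.card_fin]
    push_cast
    ring
end

section
/- Every connected α-critical graph with defect 1 is an odd cycle. -/
open Finset

namespace DefectOne

set_option linter.unusedSectionVars false

variable {V : Type} [Fintype V] {G : SimpleGraph V}

lemma stable_card_le (S : Finset V) (hS : IsStable G S) : S.card ≤ alphaNat G := by
  classical
  unfold alphaNat
  have h := Finset.le_sup (f := fun T : Finset V => if IsStable G T then T.card else 0)
    (Finset.mem_univ S)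
  simpa only [if_pos hS] using h

lemma exists_max_stable [Nonempty V] : ∃ S : Finset V, IsStable G S ∧ S.card = alphaNat G := by
  classical
  obtain ⟨S, -, hS⟩ := Finset.exists_mem_eq_sup (Finset.univ : Finset (Finset V))
    Finset.univ_nonempty (fun S : Finset V => if IsStable G S then S.card else 0)
  by_cases h : IsStable G S
  · refine ⟨S, h, ?_⟩
    unfold alphaNat
    rw [hS, if_pos h]
  · refine ⟨∅, by intro u hu; simp at hu, ?_⟩
    unfold alphaNat
    rw [hS, if_neg h]
    simp

/-- From criticality: for every edge `xy`, there is a set of size `α+1` containing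
both endpoints whose only internal edge is `xy`. -/
lemma exists_crit_set (hG : AlphaCritical G) {x y : V} (hxy : G.Adj x y) :
    ∃ S : Finset V, x ∈ S ∧ y ∈ S ∧ S.card = alphaNat G + 1 ∧
      ∀ u ∈ S, ∀ w ∈ S, G.Adj u w → (u = x ∧ w = y) ∨ (u = y ∧ w = x) := by
  classical
  have he : s(x, y) ∈ G.edgeSet := hxy
  have hlt := hG _ he
  set G' := G.deleteEdges {s(x, y)} with hG'
  have hVne : Nonempty V := ⟨x⟩
  obtain ⟨S, hSstab, hScard⟩ := (exists_max_stable (G := G'))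
  have hadj' : ∀ u w : V, G'.Adj u w ↔ G.Adj u w ∧ ¬(s(u, w) = s(x, y)) := by
    intro u w
    rw [hG', SimpleGraph.deleteEdges_adj]
    simp
  -- key: a stable set of G' minus x is stable in G
  have hstabG : ∀ T : Finset V, (∀ u ∈ T, ∀ w ∈ T, ¬ G'.Adj u w) → x ∉ T →
      IsStable G T := by
    intro T hT hxT u hu w hw hadj
    refine hT u hu w hw ?_
    rw [hadj']
    refine ⟨hadj, ?_⟩
    intro hs
    rw [Sym2.eq_iff] at hs
    rcases hs with ⟨rfl, rfl⟩ | ⟨rfl, rfl⟩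
    · exact hxT hu
    · exact hxT hw
  have hxS : x ∈ S := by
    by_contra hxS
    have := stable_card_le S (hstabG S hSstab hxS)
    omega
  have hyS : y ∈ S := by
    by_contra hyS
    have hstab : IsStable G S := by
      intro u hu w hw hadj
      refine hSstab u hu w hw ?_
      rw [hadj']
      refine ⟨hadj, ?_⟩
      intro hs
      rw [Sym2.eq_iff] at hs
      rcases hs with ⟨rfl, rfl⟩ | ⟨rfl, rfl⟩
      · exact hyS hw
      · exact hyS hu
    have := stable_card_le S hstab
    omega
  have hcard' : S.card = alphaNat G + 1 := by
    have h1 : IsStable G (S.erase x) := by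
      refine hstabG _ ?_ (Finset.notMem_erase x S)
      intro u hu w hw
      exact hSstab u (Finset.mem_of_mem_erase hu) w (Finset.mem_of_mem_erase hw)
    have h2 := stable_card_le _ h1
    have h3 : (S.erase x).card = S.card - 1 := Finset.card_erase_of_mem hxS
    have h4 : 1 ≤ S.card := Finset.card_pos.mpr ⟨x, hxS⟩
    omega
  refine ⟨S, hxS, hyS, hcard', ?_⟩
  intro u hu w hw hadj
  have := hSstab u hu w hw
  rw [hadj'] at this
  have hs : s(u, w) = s(x, y) := by
    by_contra hne
    exact this ⟨hadj, hne⟩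
  rwa [Sym2.eq_iff] at hs

/-- In a preconnected graph, any finset containing some vertex but not all has a crossing edge. -/
lemma exists_crossing (hconn : G.Preconnected) {S : Finset V} {x₀ y₀ : V}
    (hx₀ : x₀ ∈ S) (hy₀ : y₀ ∉ S) : ∃ x ∈ S, ∃ y, y ∉ S ∧ G.Adj x y := by
  classical
  obtain ⟨w⟩ := hconn x₀ y₀
  clear hconn
  induction w with
  | nil => exact absurd hx₀ hy₀
  | @cons a b c h p ih =>
      by_cases hb : b ∈ S
      · exact ih hb hy₀
      · exact ⟨a, hx₀, b, hb, h⟩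

lemma exists_neighbor (hconn : G.Connected) (h2 : 2 ≤ Fintype.card V) (v : V) :
    ∃ u, G.Adj v u := by
  classical
  obtain ⟨w, hw⟩ := Fintype.exists_ne_of_one_lt_card h2 v
  have hw' : w ∉ ({v} : Finset V) := by simp [hw]
  obtain ⟨x, hx, y, hy, hadj⟩ := exists_crossing hconn.preconnected (Finset.mem_singleton_self v) hw'
  simp only [Finset.mem_singleton] at hx
  exact ⟨y, hx ▸ hadj⟩


variable [DecidableEq V] [DecidableRel G.Adj]

lemma degree_le_two (hG : AlphaCritical G)
    (hnoniso : ∀ v : V, ∃ u, G.Adj v u)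
    (hcard : Fintype.card V = 2 * alphaNat G + 1)
    (v : V) : (G.neighborFinset v).card ≤ 2 := by
  set a := alphaNat G with ha
  have hVne : Nonempty V := ⟨v⟩
  have ha1 : 1 ≤ a := by
    have hstab : IsStable G ({v} : Finset V) := by
      intro p hp q hq hadj
      simp only [Finset.mem_singleton] at hp hq
      subst hp; subst hq; exact hadj.ne rfl
    simpa using stable_card_le _ hstab
  obtain ⟨u, hvu⟩ := hnoniso v
  obtain ⟨S, hvS, huS, hScard, hSstab⟩ := exists_crit_set hG hvu
  set M := S.erase u with hMdef
  have hvM : v ∈ M := Finset.mem_erase.mpr ⟨hvu.ne, hvS⟩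
  have hM : IsStable G M := by
    intro p hp q hq hadj
    rcases hSstab p (Finset.mem_of_mem_erase hp) q (Finset.mem_of_mem_erase hq) hadj with
      ⟨rfl, rfl⟩ | ⟨rfl, rfl⟩
    · exact (Finset.mem_erase.mp hq).1 rfl
    · exact (Finset.mem_erase.mp hp).1 rfl
  have hMcard : M.card = a := by
    rw [hMdef, Finset.card_erase_of_mem huS, hScard, ← ha]
    omega
  set B := Finset.univ \ (M ∪ G.neighborFinset v) with hBdef
  have hMNdisj : Disjoint M (G.neighborFinset v) := by
    rw [Finset.disjoint_left]
    intro x hxM hxN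
    exact hM v hvM x hxM ((SimpleGraph.mem_neighborFinset _ _ _).mp hxN)
  have hBcard : B.card + (a + (G.neighborFinset v).card) = 2 * a + 1 := by
    have h1 : (M ∪ G.neighborFinset v).card = a + (G.neighborFinset v).card := by
      rw [Finset.card_union_of_disjoint hMNdisj, hMcard]
    have h2 := Finset.card_sdiff_add_card_eq_card
      (Finset.subset_univ (M ∪ G.neighborFinset v))
    rw [Finset.card_univ, hcard, h1] at h2
    rw [← hBdef] at h2
    omega
  -- The Hall-type lemma
  have hall : ∀ (m : ℕ) (W : Finset V), W.card = m → W ⊆ M.erase v →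
      W.card ≤ (B ∩ W.biUnion (fun x => G.neighborFinset x)).card := by
    intro m
    induction m using Nat.strong_induction_on with
    | _ m IH =>
    intro W hWm hWsub
    by_contra hlt
    push_neg at hlt
    have hWM : W ⊆ M := hWsub.trans (Finset.erase_subset v M)
    have hvW : v ∉ W := fun h => (Finset.notMem_erase v M) (hWsub h)
    have hWstab : IsStable G W := fun p hp q hq => hM p (hWM hp) q (hWM hq)
    have hWne : W.Nonempty := by
      rcases Finset.eq_empty_or_nonempty W with rfl | h
      · simp at hlt
      · exact h
    set Z := B ∩ W.biUnion (fun x => G.neighborFinset x) with hZdef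
    have hNW_M : ∀ x ∈ W.biUnion (fun x => G.neighborFinset x), x ∉ M := by
      intro x hx hxM
      obtain ⟨w, hwW, hwx⟩ := Finset.mem_biUnion.mp hx
      exact hM w (hWM hwW) x hxM ((SimpleGraph.mem_neighborFinset _ _ _).mp hwx)
    have hIH : ∀ W' : Finset V, W'.card < W.card → W' ⊆ M.erase v →
        W'.card ≤ (B ∩ W'.biUnion (fun x => G.neighborFinset x)).card := by
      intro W' h1 h2
      exact IH W'.card (hWm ▸ h1) W' rfl h2
    have hZcard : Z.card + 1 = W.card := by
      obtain ⟨w1, hw1⟩ := hWne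
      have h5 : 1 ≤ W.card := Finset.card_pos.mpr ⟨w1, hw1⟩
      have h4 : (W.erase w1).card = W.card - 1 := Finset.card_erase_of_mem hw1
      have h1 : (W.erase w1).card ≤ (B ∩ (W.erase w1).biUnion (fun x => G.neighborFinset x)).card := by
        apply hIH
        · omega
        · exact (Finset.erase_subset w1 W).trans hWsub
      have h2 : (B ∩ (W.erase w1).biUnion (fun x => G.neighborFinset x)) ⊆ Z := by
        rw [hZdef]
        exact Finset.inter_subset_inter (Finset.Subset.refl B)
          (Finset.biUnion_subset_biUnion_of_subset_left _ (Finset.erase_subset w1 W))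
      have h3 := Finset.card_le_card h2
      omega
    -- matching avoiding a chosen w₀
    have matching : ∀ w₀ ∈ W, ∃ g : V → V,
        (∀ w ∈ W.erase w₀, g w ∈ B ∧ G.Adj w (g w)) ∧
        Set.InjOn g (W.erase w₀ : Finset V) := by
      intro w₀ hw₀
      have hHall : ∀ s : Finset {x // x ∈ W.erase w₀},
          s.card ≤ (s.biUnion fun i => B ∩ G.neighborFinset i.1).card := by
        intro s
        have h1 : (s.image Subtype.val) ⊆ W.erase w₀ := by
          intro x hx
          obtain ⟨⟨x', hx'⟩, -, rfl⟩ := Finset.mem_image.mp hx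
          exact hx'
      -- image card is small
        have hsmall : (s.image Subtype.val).card < W.card := by
          calc (s.image Subtype.val).card ≤ (W.erase w₀).card := Finset.card_le_card h1
            _ < W.card := by
                rw [Finset.card_erase_of_mem hw₀]
                have : 1 ≤ W.card := Finset.card_pos.mpr ⟨w₀, hw₀⟩
                omega
        have h2 := hIH _ hsmall (h1.trans ((Finset.erase_subset w₀ W).trans hWsub))
        have h3 : (s.image Subtype.val).card = s.card :=
          Finset.card_image_of_injective _ Subtype.val_injective
        have h4 : B ∩ (s.image Subtype.val).biUnion (fun x => G.neighborFinset x) =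
            s.biUnion fun i => B ∩ G.neighborFinset i.1 := by
          ext x
          simp only [Finset.mem_inter, Finset.mem_biUnion, Finset.mem_image]
          constructor
          · rintro ⟨hB, w, ⟨i, his, rfl⟩, hN⟩
            exact ⟨i, his, hB, hN⟩
          · rintro ⟨i, his, hB, hN⟩
            exact ⟨hB, i, ⟨i, his, rfl⟩, hN⟩
        rw [h4, h3] at h2
        exact h2
      obtain ⟨g0, hg0inj, hg0mem⟩ :=
        (Finset.all_card_le_biUnion_card_iff_existsInjective'
          (fun i : {x // x ∈ W.erase w₀} => B ∩ G.neighborFinset i.1)).mp hHall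
      refine ⟨fun x => if h : x ∈ W.erase w₀ then g0 ⟨x, h⟩ else x, ?_, ?_⟩
      · intro w hw
        simp only [dif_pos hw]
        have := hg0mem ⟨w, hw⟩
        rw [Finset.mem_inter] at this
        exact ⟨this.1, (SimpleGraph.mem_neighborFinset _ _ _).mp this.2⟩
      · intro p hp q hq hpq
        rw [Finset.mem_coe] at hp hq
        simp only [dif_pos hp, dif_pos hq] at hpq
        exact congrArg Subtype.val (hg0inj hpq)
    -- Now split into two cases
    by_cases hcase : ∃ w ∈ W, ∃ y, G.Adj w y ∧ G.Adj v y
    · -- Case 1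
      obtain ⟨w₀, hw₀W, y, hw₀y, hvy⟩ := hcase
      obtain ⟨S1, hvS1, hyS1, hS1card, hS1stab⟩ := exists_crit_set hG hvy
      set Mstar := S1.erase v with hMstardef
      have hyMstar : y ∈ Mstar := Finset.mem_erase.mpr ⟨hvy.ne', hyS1⟩
      have hMstarstab : IsStable G Mstar := by
        intro p hp q hq hadj
        rcases hS1stab p (Finset.mem_of_mem_erase hp) q (Finset.mem_of_mem_erase hq) hadj with
          ⟨rfl, rfl⟩ | ⟨rfl, rfl⟩
        · exact (Finset.mem_erase.mp hp).1 rfl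
        · exact (Finset.mem_erase.mp hq).1 rfl
      have hMstarcard : Mstar.card = a := by
        rw [hMstardef, Finset.card_erase_of_mem hvS1, hS1card, ← ha]
        omega
      have hvMstar : v ∉ Mstar := Finset.notMem_erase v S1
      have hw₀Mstar : w₀ ∉ Mstar := by
        intro h
        exact hMstarstab w₀ h y hyMstar hw₀y
      have hNvM : ∀ x ∈ Mstar, G.Adj v x → x = y := by
        intro x hx hadj
        rcases hS1stab v hvS1 x (Finset.mem_of_mem_erase hx) hadj with ⟨-, rfl⟩ | ⟨h1, -⟩
        · rfl
        · exact absurd h1 hvy.ne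
      obtain ⟨g, hgmem, hginj⟩ := matching w₀ hw₀W
      have h1 : (W ∩ Mstar).card ≤ (Z \ Mstar).card := by
        apply Finset.card_le_card_of_injOn g
        · intro w hw
          rw [Finset.mem_coe, Finset.mem_inter] at hw
          have hne : w ≠ w₀ := fun h => hw₀Mstar (h ▸ hw.2)
          have hmem : w ∈ W.erase w₀ := Finset.mem_erase.mpr ⟨hne, hw.1⟩
          obtain ⟨hB, hadj⟩ := hgmem w hmem
          refine Finset.mem_sdiff.mpr ⟨Finset.mem_inter.mpr ⟨hB, ?_⟩, ?_⟩
          · exact Finset.mem_biUnion.mpr ⟨w, hw.1, (SimpleGraph.mem_neighborFinset _ _ _).mpr hadj⟩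
          · intro hgM
            exact hMstarstab w hw.2 (g w) hgM hadj
        · intro p hp q hq hpq
          rw [Finset.mem_coe, Finset.mem_inter] at hp hq
          have hpmem : p ∈ W.erase w₀ :=
            Finset.mem_erase.mpr ⟨fun h => hw₀Mstar (h ▸ hp.2), hp.1⟩
          have hqmem : q ∈ W.erase w₀ :=
            Finset.mem_erase.mpr ⟨fun h => hw₀Mstar (h ▸ hq.2), hq.1⟩
          exact hginj (Finset.mem_coe.mpr hpmem) (Finset.mem_coe.mpr hqmem) hpq
      have hyNW : y ∈ W.biUnion (fun x => G.neighborFinset x) :=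
        Finset.mem_biUnion.mpr ⟨w₀, hw₀W, (SimpleGraph.mem_neighborFinset _ _ _).mpr hw₀y⟩
      have h2 : (W.biUnion (fun x => G.neighborFinset x) ∩ Mstar).card ≤ (Z ∩ Mstar).card + 1 := by
        have hsub : W.biUnion (fun x => G.neighborFinset x) ∩ Mstar ⊆ (Z ∩ Mstar) ∪ {y} := by
          intro x hx
          rw [Finset.mem_inter] at hx
          by_cases hvx : G.Adj v x
          · rw [Finset.mem_union, Finset.mem_singleton]
            exact Or.inr (hNvM x hx.2 hvx)
          · have hxB : x ∈ B := by
              rw [hBdef, Finset.mem_sdiff, Finset.mem_union]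
              refine ⟨Finset.mem_univ x, ?_⟩
              push_neg
              exact ⟨hNW_M x hx.1, fun h => hvx ((SimpleGraph.mem_neighborFinset _ _ _).mp h)⟩
            exact Finset.mem_union_left _
              (Finset.mem_inter.mpr ⟨Finset.mem_inter.mpr ⟨hxB, hx.1⟩, hx.2⟩)
        calc (W.biUnion (fun x => G.neighborFinset x) ∩ Mstar).card ≤ ((Z ∩ Mstar) ∪ {y}).card :=
              Finset.card_le_card hsub
          _ ≤ (Z ∩ Mstar).card + 1 := by
              apply (Finset.card_union_le _ _).trans
              simp
      -- build the big stable set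
      set I := (Mstar \ W.biUnion (fun x => G.neighborFinset x)) ∪ (W \ Mstar) ∪ {v} with hIdef
      have hIstab : IsStable G I := by
        intro p hp q hq hadj
        simp only [hIdef, Finset.mem_union, Finset.mem_sdiff, Finset.mem_singleton] at hp hq
        rcases hp with (⟨hpM, hpNW⟩ | ⟨hpW, hpM⟩) | hpv <;>
          rcases hq with (⟨hqM, hqNW⟩ | ⟨hqW, hqM⟩) | hqv
        · exact hMstarstab p hpM q hqM hadj
        · exact hpNW (Finset.mem_biUnion.mpr
            ⟨q, hqW, (SimpleGraph.mem_neighborFinset _ _ _).mpr hadj.symm⟩)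
        · subst hqv
          exact hpNW ((hNvM p hpM hadj.symm) ▸ hyNW)
        · exact hqNW (Finset.mem_biUnion.mpr
            ⟨p, hpW, (SimpleGraph.mem_neighborFinset _ _ _).mpr hadj⟩)
        · exact hWstab p hpW q hqW hadj
        · subst hqv
          exact hM p (hWM hpW) q hvM hadj
        · subst hpv
          exact hqNW ((hNvM q hqM hadj) ▸ hyNW)
        · subst hpv
          exact hM p hvM q (hWM hqW) hadj
        · subst hpv
          exact hadj.ne hqv.symm
      have hd1 : Disjoint (Mstar \ W.biUnion (fun x => G.neighborFinset x)) (W \ Mstar) := by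
        rw [Finset.disjoint_left]
        intro x hx1 hx2
        exact (Finset.mem_sdiff.mp hx2).2 (Finset.mem_sdiff.mp hx1).1
      have hd2 : v ∉ (Mstar \ W.biUnion (fun x => G.neighborFinset x)) ∪ (W \ Mstar) := by
        rw [Finset.mem_union]
        push_neg
        constructor
        · intro h; exact hvMstar (Finset.mem_sdiff.mp h).1
        · intro h; exact hvW (Finset.mem_sdiff.mp h).1
      have hIcard : I.card = (Mstar \ W.biUnion (fun x => G.neighborFinset x)).card + (W \ Mstar).card + 1 := by
        rw [hIdef, Finset.card_union_of_disjoint (Finset.disjoint_singleton_right.mpr hd2),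
          Finset.card_union_of_disjoint hd1, Finset.card_singleton]
      have csd1 : (Mstar \ W.biUnion (fun x => G.neighborFinset x)).card
          + (W.biUnion (fun x => G.neighborFinset x) ∩ Mstar).card = a := by
        have h := Finset.card_sdiff_add_card_eq_card
          (show W.biUnion (fun x => G.neighborFinset x) ∩ Mstar ⊆ Mstar from
            Finset.inter_subset_right)
        rw [Finset.sdiff_inter_self_right] at h
        rw [← hMstarcard]
        exact h
      have csd2 : (W \ Mstar).card + (W ∩ Mstar).card = W.card := by
        have h := Finset.card_sdiff_add_card_eq_card
          (show W ∩ Mstar ⊆ W from Finset.inter_subset_left)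
        rwa [Finset.sdiff_inter_self_left] at h
      have csd3 : (Z \ Mstar).card + (Z ∩ Mstar).card = Z.card := by
        have h := Finset.card_sdiff_add_card_eq_card
          (show Z ∩ Mstar ⊆ Z from Finset.inter_subset_left)
        rwa [Finset.sdiff_inter_self_left] at h
      have hfinal := stable_card_le I hIstab
      rw [← ha] at hfinal
      omega
    · -- Case 2
      push_neg at hcase
      obtain ⟨w₀, hw₀W⟩ := hWne
      obtain ⟨z, hw₀z⟩ := hnoniso w₀
      obtain ⟨S2, hw₀S2, hzS2, hS2card, hS2stab⟩ := exists_crit_set hG hw₀z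
      set Mstar := S2.erase w₀ with hMstardef
      have hMstarstab : IsStable G Mstar := by
        intro p hp q hq hadj
        rcases hS2stab p (Finset.mem_of_mem_erase hp) q (Finset.mem_of_mem_erase hq) hadj with
          ⟨rfl, rfl⟩ | ⟨rfl, rfl⟩
        · exact (Finset.mem_erase.mp hp).1 rfl
        · exact (Finset.mem_erase.mp hq).1 rfl
      have hMstarcard : Mstar.card = a := by
        rw [hMstardef, Finset.card_erase_of_mem hw₀S2, hS2card, ← ha]
        omega
      have hw₀Mstar : w₀ ∉ Mstar := Finset.notMem_erase w₀ S2
      obtain ⟨g, hgmem, hginj⟩ := matching w₀ hw₀W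
      have h1 : (W ∩ Mstar).card ≤ (Z \ Mstar).card := by
        apply Finset.card_le_card_of_injOn g
        · intro w hw
          rw [Finset.mem_coe, Finset.mem_inter] at hw
          have hne : w ≠ w₀ := fun h => hw₀Mstar (h ▸ hw.2)
          have hmem : w ∈ W.erase w₀ := Finset.mem_erase.mpr ⟨hne, hw.1⟩
          obtain ⟨hB, hadj⟩ := hgmem w hmem
          refine Finset.mem_sdiff.mpr ⟨Finset.mem_inter.mpr ⟨hB, ?_⟩, ?_⟩
          · exact Finset.mem_biUnion.mpr ⟨w, hw.1, (SimpleGraph.mem_neighborFinset _ _ _).mpr hadj⟩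
          · intro hgM
            exact hMstarstab w hw.2 (g w) hgM hadj
        · intro p hp q hq hpq
          rw [Finset.mem_coe, Finset.mem_inter] at hp hq
          have hpmem : p ∈ W.erase w₀ :=
            Finset.mem_erase.mpr ⟨fun h => hw₀Mstar (h ▸ hp.2), hp.1⟩
          have hqmem : q ∈ W.erase w₀ :=
            Finset.mem_erase.mpr ⟨fun h => hw₀Mstar (h ▸ hq.2), hq.1⟩
          exact hginj (Finset.mem_coe.mpr hpmem) (Finset.mem_coe.mpr hqmem) hpq
      have h2 : (W.biUnion (fun x => G.neighborFinset x) ∩ Mstar).card ≤ (Z ∩ Mstar).card := by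
        apply Finset.card_le_card
        intro x hx
        rw [Finset.mem_inter] at hx
        obtain ⟨w, hwW, hwx⟩ := Finset.mem_biUnion.mp hx.1
        have hnadj : ¬ G.Adj v x :=
          hcase w hwW x ((SimpleGraph.mem_neighborFinset _ _ _).mp hwx)
        have hxB : x ∈ B := by
          rw [hBdef, Finset.mem_sdiff, Finset.mem_union]
          refine ⟨Finset.mem_univ x, ?_⟩
          push_neg
          exact ⟨hNW_M x hx.1, fun h => hnadj ((SimpleGraph.mem_neighborFinset _ _ _).mp h)⟩
        exact Finset.mem_inter.mpr ⟨Finset.mem_inter.mpr ⟨hxB, hx.1⟩, hx.2⟩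
      set I := (Mstar \ W.biUnion (fun x => G.neighborFinset x)) ∪ (W \ Mstar) with hIdef
      have hIstab : IsStable G I := by
        intro p hp q hq hadj
        simp only [hIdef, Finset.mem_union, Finset.mem_sdiff] at hp hq
        rcases hp with ⟨hpM, hpNW⟩ | ⟨hpW, hpM⟩ <;>
          rcases hq with ⟨hqM, hqNW⟩ | ⟨hqW, hqM⟩
        · exact hMstarstab p hpM q hqM hadj
        · exact hpNW (Finset.mem_biUnion.mpr
            ⟨q, hqW, (SimpleGraph.mem_neighborFinset _ _ _).mpr hadj.symm⟩)
        · exact hqNW (Finset.mem_biUnion.mpr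
            ⟨p, hpW, (SimpleGraph.mem_neighborFinset _ _ _).mpr hadj⟩)
        · exact hWstab p hpW q hqW hadj
      have hd1 : Disjoint (Mstar \ W.biUnion (fun x => G.neighborFinset x)) (W \ Mstar) := by
        rw [Finset.disjoint_left]
        intro x hx1 hx2
        exact (Finset.mem_sdiff.mp hx2).2 (Finset.mem_sdiff.mp hx1).1
      have hIcard : I.card = (Mstar \ W.biUnion (fun x => G.neighborFinset x)).card + (W \ Mstar).card := by
        rw [hIdef, Finset.card_union_of_disjoint hd1]
      have csd1 : (Mstar \ W.biUnion (fun x => G.neighborFinset x)).card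
          + (W.biUnion (fun x => G.neighborFinset x) ∩ Mstar).card = a := by
        have h := Finset.card_sdiff_add_card_eq_card
          (show W.biUnion (fun x => G.neighborFinset x) ∩ Mstar ⊆ Mstar from
            Finset.inter_subset_right)
        rw [Finset.sdiff_inter_self_right] at h
        rw [← hMstarcard]
        exact h
      have csd2 : (W \ Mstar).card + (W ∩ Mstar).card = W.card := by
        have h := Finset.card_sdiff_add_card_eq_card
          (show W ∩ Mstar ⊆ W from Finset.inter_subset_left)
        rwa [Finset.sdiff_inter_self_left] at h
      have csd3 : (Z \ Mstar).card + (Z ∩ Mstar).card = Z.card := by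
        have h := Finset.card_sdiff_add_card_eq_card
          (show Z ∩ Mstar ⊆ Z from Finset.inter_subset_left)
        rwa [Finset.sdiff_inter_self_left] at h
      have hfinal := stable_card_le I hIstab
      rw [← ha] at hfinal
      omega
  -- apply the Hall lemma with W = M.erase v
  have hMe : (M.erase v).card + 1 = a := by
    rw [Finset.card_erase_of_mem hvM, hMcard]
    omega
  have happ := hall (M.erase v).card (M.erase v) rfl (Finset.Subset.refl _)
  have hsub : (B ∩ (M.erase v).biUnion (fun x => G.neighborFinset x)) ⊆ B := Finset.inter_subset_left
  have hle := Finset.card_le_card hsub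
  omega


lemma iso_cycle (hconn : G.Connected)
    (hdeg : ∀ v : V, (G.neighborFinset v).card ≤ 2)
    (hcard : Fintype.card V = 2 * alphaNat G + 1)
    (ha1 : 1 ≤ alphaNat G) :
    Nonempty (G ≃g SimpleGraph.cycleGraph (2 * alphaNat G + 1)) := by
  classical
  set a := alphaNat G with ha
  have hVne : Nonempty V := by
    rw [← Fintype.card_pos_iff, hcard]; omega
  obtain ⟨v₀⟩ := hVne
  set Q : ℕ → Prop := fun k => ∃ f : ℕ → V,
    (∀ i, i < k → G.Adj (f i) (f (i+1))) ∧
    (∀ i j, i ≤ k → j ≤ k → f i = f j → i = j) with hQ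
  have hQ0 : Q 0 :=
    ⟨fun _ => v₀, fun i h => absurd h (Nat.not_lt_zero i), fun i j hi hj _ => by omega⟩
  have hQbound : ∀ k, Q k → k < 2*a+1 := by
    rintro k ⟨f, hadj, hinj⟩
    have hinjOn : Set.InjOn f (Finset.range (k+1)) := by
      intro i hi j hj hij
      rw [Finset.mem_coe, Finset.mem_range] at hi hj
      exact hinj i j (by omega) (by omega) hij
    have h1 : ((Finset.range (k+1)).image f).card = k + 1 := by
      rw [Finset.card_image_of_injOn hinjOn, Finset.card_range]
    have h2 := Finset.card_le_univ ((Finset.range (k+1)).image f)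
    rw [h1, hcard] at h2
    omega
  haveI : DecidablePred Q := Classical.decPred Q
  set k := Nat.findGreatest Q (2*a+1) with hk
  have hQk : Q k := Nat.findGreatest_spec (Nat.zero_le _) hQ0
  have hklt : k < 2*a+1 := hQbound k hQk
  have hmax : ¬ Q (k+1) := Nat.findGreatest_is_greatest (n := 2*a+1) (by omega) (by omega)
  obtain ⟨f, hadj, hinj⟩ := hQk
  have hinjOn : Set.InjOn f (Finset.range (k+1)) := by
    intro i hi j hj hij
    rw [Finset.mem_coe, Finset.mem_range] at hi hj
    exact hinj i j (by omega) (by omega) hij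
  have himgcard : ((Finset.range (k+1)).image f).card = k + 1 := by
    rw [Finset.card_image_of_injOn hinjOn, Finset.card_range]
  -- the maximal path is spanning
  have himg : (Finset.range (k+1)).image f = Finset.univ := by
    by_contra hne
    obtain ⟨y₀, hy₀⟩ : ∃ y, y ∉ (Finset.range (k+1)).image f := by
      by_contra h
      push_neg at h
      exact hne (Finset.eq_univ_of_forall h)
    have hx₀ : f 0 ∈ (Finset.range (k+1)).image f :=
      Finset.mem_image.mpr ⟨0, Finset.mem_range.mpr (by omega), rfl⟩
    obtain ⟨x, hx, y, hy, hxy⟩ := exists_crossing hconn.preconnected hx₀ hy₀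
    obtain ⟨i, hi, rfl⟩ := Finset.mem_image.mp hx
    rw [Finset.mem_range] at hi
    have hyne : ∀ j, j ≤ k → y ≠ f j := by
      intro j hj hyj
      exact hy (Finset.mem_image.mpr ⟨j, Finset.mem_range.mpr (by omega), hyj.symm⟩)
    by_cases hik : i = k
    · -- append y at the end
      apply hmax
      refine ⟨fun m => if m ≤ k then f m else y, ?_, ?_⟩
      · intro j hj
        by_cases h1 : j < k
        · simp only [if_pos (by omega : j ≤ k), if_pos (by omega : j+1 ≤ k)]
          exact hadj j h1
        · have hjk : j = k := by omega
          simp only [if_pos (show j ≤ k by omega), if_neg (show ¬ j+1 ≤ k by omega)]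
          rw [hjk, ← hik]
          exact hxy
      · intro p q hp hq hpq
        by_cases h1 : p ≤ k <;> by_cases h2 : q ≤ k
        · simp only [if_pos h1, if_pos h2] at hpq
          exact hinj p q h1 h2 hpq
        · simp only [if_pos h1, if_neg h2] at hpq
          exact absurd hpq.symm (hyne p h1)
        · simp only [if_neg h1, if_pos h2] at hpq
          exact absurd hpq (hyne q h2)
        · omega
    · by_cases hi0 : i = 0
      · -- prepend y at the start
        apply hmax
        refine ⟨fun m => if m = 0 then y else f (m-1), ?_, ?_⟩
        · intro j hj
          by_cases h1 : j = 0
          · subst h1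
            simp only [if_pos rfl, if_neg one_ne_zero]
            exact (hi0 ▸ hxy).symm
          · simp only [if_neg h1, if_neg (by omega : ¬ j+1 = 0)]
            have hlt : j - 1 < k := by omega
            have h2 := hadj (j-1) hlt
            have e1 : j - 1 + 1 = j := by omega
            have e2 : j + 1 - 1 = j := by omega
            rw [e1] at h2
            rw [e2]
            exact h2
        · intro p q hp hq hpq
          by_cases h1 : p = 0 <;> by_cases h2 : q = 0
          · omega
          · subst h1
            simp only [if_pos rfl, if_neg h2] at hpq
            exact absurd hpq (hyne (q-1) (by omega))
          · subst h2
            simp only [if_pos rfl, if_neg h1] at hpq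
            exact absurd hpq.symm (hyne (p-1) (by omega))
          · simp only [if_neg h1, if_neg h2] at hpq
            have := hinj (p-1) (q-1) (by omega) (by omega) hpq
            omega
      · -- middle vertex would have degree ≥ 3
        exfalso
        have h0 : 0 < i := by omega
        have hik' : i < k := by omega
        have hsub : ({f (i-1), f (i+1), y} : Finset V) ⊆ G.neighborFinset (f i) := by
          intro x hx
          simp only [Finset.mem_insert, Finset.mem_singleton] at hx
          rcases hx with rfl | rfl | rfl
          · rw [SimpleGraph.mem_neighborFinset]
            have h2 := hadj (i-1) (by omega)
            have e1 : i - 1 + 1 = i := by omega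
            rw [e1] at h2
            exact h2.symm
          · rw [SimpleGraph.mem_neighborFinset]
            exact hadj i hik'
          · rw [SimpleGraph.mem_neighborFinset]
            exact hxy
        have hcard3 : ({f (i-1), f (i+1), y} : Finset V).card = 3 := by
          rw [Finset.card_insert_of_notMem, Finset.card_insert_of_notMem,
            Finset.card_singleton]
          · simp only [Finset.mem_singleton]
            intro h
            exact hyne (i+1) (by omega) h.symm
          · simp only [Finset.mem_insert, Finset.mem_singleton]
            push_neg
            constructor
            · intro h
              have := hinj (i-1) (i+1) (by omega) (by omega) h
              omega
            · intro h
              exact hyne (i-1) (by omega) h.symm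
        have hle := Finset.card_le_card hsub
        have h2 := hdeg (f i)
        omega
  have hkval : k = 2*a := by
    have h1 := himgcard
    rw [himg, Finset.card_univ, hcard] at h1
    omega
  -- classification of edges along the path
  have hclass : ∀ i j, i ≤ k → j ≤ k → i + 2 ≤ j → G.Adj (f i) (f j) → i = 0 ∧ j = k := by
    intro i j hi hj hij hadj'
    have hjk : j = k := by
      by_contra hjk
      have hjlt : j < k := by omega
      have hsub : ({f (j-1), f (j+1), f i} : Finset V) ⊆ G.neighborFinset (f j) := by
        intro x hx
        simp only [Finset.mem_insert, Finset.mem_singleton] at hx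
        rcases hx with rfl | rfl | rfl
        · rw [SimpleGraph.mem_neighborFinset]
          have h2 := hadj (j-1) (by omega)
          have e1 : j - 1 + 1 = j := by omega
          rw [e1] at h2
          exact h2.symm
        · rw [SimpleGraph.mem_neighborFinset]
          exact hadj j hjlt
        · rw [SimpleGraph.mem_neighborFinset]
          exact hadj'.symm
      have hcard3 : ({f (j-1), f (j+1), f i} : Finset V).card = 3 := by
        rw [Finset.card_insert_of_notMem, Finset.card_insert_of_notMem,
          Finset.card_singleton]
        · simp only [Finset.mem_singleton]
          intro h
          have := hinj (j+1) i (by omega) (by omega) h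
          omega
        · simp only [Finset.mem_insert, Finset.mem_singleton]
          push_neg
          constructor
          · intro h
            have := hinj (j-1) (j+1) (by omega) (by omega) h
            omega
          · intro h
            have := hinj (j-1) i (by omega) (by omega) h
            omega
      have hle := Finset.card_le_card hsub
      have h2 := hdeg (f j)
      omega
    have hi0 : i = 0 := by
      by_contra hi0
      have h0 : 0 < i := by omega
      have hik' : i < k := by omega
      have hsub : ({f (i-1), f (i+1), f j} : Finset V) ⊆ G.neighborFinset (f i) := by
        intro x hx
        simp only [Finset.mem_insert, Finset.mem_singleton] at hx
        rcases hx with rfl | rfl | rfl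
        · rw [SimpleGraph.mem_neighborFinset]
          have h2 := hadj (i-1) (by omega)
          have e1 : i - 1 + 1 = i := by omega
          rw [e1] at h2
          exact h2.symm
        · rw [SimpleGraph.mem_neighborFinset]
          exact hadj i hik'
        · rw [SimpleGraph.mem_neighborFinset]
          exact hadj'
      have hcard3 : ({f (i-1), f (i+1), f j} : Finset V).card = 3 := by
        rw [Finset.card_insert_of_notMem, Finset.card_insert_of_notMem,
          Finset.card_singleton]
        · simp only [Finset.mem_singleton]
          intro h
          have := hinj (i+1) j (by omega) (by omega) h
          omega
        · simp only [Finset.mem_insert, Finset.mem_singleton]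
          push_neg
          constructor
          · intro h
            have := hinj (i-1) (i+1) (by omega) (by omega) h
            omega
          · intro h
            have := hinj (i-1) j (by omega) (by omega) h
            omega
      have hle := Finset.card_le_card hsub
      have h2 := hdeg (f i)
      omega
    exact ⟨hi0, hjk⟩
  -- the closing edge exists
  have hend : G.Adj (f 0) (f k) := by
    by_contra hend
    set T := (Finset.range (a+1)).image (fun m => f (2*m)) with hT
    have hTcard : T.card = a + 1 := by
      rw [hT, Finset.card_image_of_injOn, Finset.card_range]
      intro p hp q hq hpq
      rw [Finset.mem_coe, Finset.mem_range] at hp hq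
      have := hinj (2*p) (2*q) (by omega) (by omega) hpq
      omega
    have hTstab : IsStable G T := by
      intro p hp q hq hadj'
      rw [hT] at hp hq
      obtain ⟨b, hb, rfl⟩ := Finset.mem_image.mp hp
      obtain ⟨c, hc, rfl⟩ := Finset.mem_image.mp hq
      rw [Finset.mem_range] at hb hc
      rcases lt_trichotomy b c with h | h | h
      · have hcl := hclass (2*b) (2*c) (by omega) (by omega) (by omega) hadj'
        apply hend
        rw [← hcl.1, ← hcl.2]
        exact hadj'
      · subst h
        exact hadj'.ne rfl
      · have hcl := hclass (2*c) (2*b) (by omega) (by omega) (by omega) hadj'.symm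
        apply hend
        rw [← hcl.1, ← hcl.2]
        exact hadj'.symm
    have := stable_card_le T hTstab
    rw [← ha] at this
    omega
  -- full adjacency characterization
  have hfull : ∀ i j, i ≤ k → j ≤ k →
      (G.Adj (f i) (f j) ↔ (j = i+1 ∨ i = j+1 ∨ (i = 0 ∧ j = k) ∨ (j = 0 ∧ i = k))) := by
    intro i j hi hj
    constructor
    · intro h
      rcases lt_trichotomy i j with hlt | heq | hlt
      · by_cases h2 : j = i + 1
        · exact Or.inl h2
        · exact Or.inr (Or.inr (Or.inl (hclass i j hi hj (by omega) h)))
      · subst heq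
        exact absurd rfl h.ne
      · by_cases h2 : i = j + 1
        · exact Or.inr (Or.inl h2)
        · have := hclass j i hj hi (by omega) h.symm
          exact Or.inr (Or.inr (Or.inr this))
    · rintro (rfl | rfl | ⟨rfl, rfl⟩ | ⟨rfl, rfl⟩)
      · exact hadj i (by omega)
      · exact (hadj j (by omega)).symm
      · exact hend
      · exact hend.symm
  -- build the isomorphism
  have hbij : Function.Bijective (fun i : Fin (k+1) => f i.val) := by
    constructor
    · intro p q hpq
      have hp := p.isLt
      have hq := q.isLt
      exact Fin.ext (hinj p.val q.val (by omega) (by omega) hpq)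
    · intro y
      have hy : y ∈ (Finset.range (k+1)).image f := himg ▸ Finset.mem_univ y
      obtain ⟨i, hi, hfi⟩ := Finset.mem_image.mp hy
      rw [Finset.mem_range] at hi
      exact ⟨⟨i, hi⟩, hfi⟩
  have hsubval : ∀ (p q : Fin (k+1)), ((p - q : Fin (k+1)).val = 1) ↔
      (p.val = q.val + 1 ∨ (q.val = k ∧ p.val = 0)) := by
    intro p q
    rw [Fin.sub_def]
    simp only
    have hp := p.isLt
    have hq := q.isLt
    rcases le_or_gt q.val p.val with hle | hlt
    · have heq : (k + 1 - q.val) + p.val = (p.val - q.val) + (k+1) := by omega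
      rw [heq, Nat.add_mod_right, Nat.mod_eq_of_lt (by omega)]
      omega
    · rw [Nat.mod_eq_of_lt (by omega)]
      omega
  have hiso : SimpleGraph.cycleGraph (k+1) ≃g G := by
    refine ⟨Equiv.ofBijective _ hbij, ?_⟩
    intro p q
    show G.Adj (f p.val) (f q.val) ↔ _
    have hp := p.isLt
    have hq := q.isLt
    rw [SimpleGraph.cycleGraph_adj']
    rw [hfull p.val q.val (by omega) (by omega), hsubval p q, hsubval q p]
    constructor
    · intro h
      omega
    · intro h
      omega
  have hk1 : k + 1 = 2*a+1 := by omega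
  exact ⟨hk1 ▸ hiso.symm⟩

end DefectOne

theorem defect_one_is_odd_cycle {V : Type} [Fintype V] (G : SimpleGraph V)
    (hconn : G.Connected) (hG : AlphaCritical G)
    (hdef : (Fintype.card V : ℤ) - 2 * alphaNat G = 1) :
    ∃ n : ℕ, Odd n ∧ 3 ≤ n ∧ Nonempty (G ≃g SimpleGraph.cycleGraph n) := by
  classical
  have hcard : Fintype.card V = 2 * alphaNat G + 1 := by omega
  have hVne : Nonempty V := by
    rw [← Fintype.card_pos_iff]; omega
  obtain ⟨v₀⟩ := hVne
  have ha1 : 1 ≤ alphaNat G := by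
    have hstab : IsStable G ({v₀} : Finset V) := by
      intro p hp q hq hadj
      simp only [Finset.mem_singleton] at hp hq
      subst hp; subst hq
      exact hadj.ne rfl
    simpa using DefectOne.stable_card_le _ hstab
  have h2 : 2 ≤ Fintype.card V := by omega
  have hnoniso : ∀ v : V, ∃ u, G.Adj v u := fun v =>
    DefectOne.exists_neighbor hconn h2 v
  have hdeg : ∀ v, (G.neighborFinset v).card ≤ 2 := fun v =>
    DefectOne.degree_le_two hG hnoniso hcard v
  obtain ⟨iso⟩ := DefectOne.iso_cycle hconn hdeg hcard ha1
  exact ⟨2 * alphaNat G + 1, ⟨alphaNat G, by omega⟩, by omega, ⟨iso⟩⟩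
end

section
/- Let G be a graph with maximum degree at least 4 and let v be a vertex of degree ≥ 4. Partition the neighborhood of v into N_1, N_2 with |N_1|, |N_2| ≥ 2, and let G' be obtained from G by deleting v, adding three new vertices v_1, v_2, v', and adding edges v_1v', v_2v', and v_i u for all u ∈ N_i (i = 1,2). Then α(G') = α(G) + 1; hence G' has the same defect as G. -/
open Finset

/-- The graph obtained from `G` by splitting the vertex `v`: delete `v`, add
three new vertices `v₁ = inr 0`, `v₂ = inr 1`, `v' = inr 2`, join `v₁` and
`v₂` to `v'`, and join `vᵢ` to the vertices of `Nᵢ`. -/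
def splitVertex {V : Type} (G : SimpleGraph V) (v : V) (N1 N2 : Finset V) :
    SimpleGraph ({u : V // u ≠ v} ⊕ Fin 3) :=
  SimpleGraph.fromRel (fun p q =>
    (∃ a b : {u : V // u ≠ v}, p = Sum.inl a ∧ q = Sum.inl b ∧ G.Adj a.1 b.1) ∨
    (p = Sum.inr 0 ∧ q = Sum.inr 2) ∨
    (p = Sum.inr 1 ∧ q = Sum.inr 2) ∨
    (∃ a : {u : V // u ≠ v}, p = Sum.inr 0 ∧ q = Sum.inl a ∧ a.1 ∈ N1) ∨
    (∃ a : {u : V // u ≠ v}, p = Sum.inr 1 ∧ q = Sum.inl a ∧ a.1 ∈ N2))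

lemma card_le_alphaNat {V : Type} [Fintype V] {G : SimpleGraph V} {S : Finset V}
    (h : IsStable G S) : S.card ≤ alphaNat G := by
  classical
  have hdef : alphaNat G =
      Finset.univ.sup (fun S : Finset V => if IsStable G S then S.card else 0) := rfl
  rw [hdef]
  simpa [h] using Finset.le_sup
    (f := fun S : Finset V => if IsStable G S then S.card else 0) (Finset.mem_univ S)

lemma exists_alphaNat {V : Type} [Fintype V] (G : SimpleGraph V) :
    ∃ S : Finset V, IsStable G S ∧ S.card = alphaNat G := by
  classical
  obtain ⟨S, -, hS⟩ := Finset.exists_mem_eq_sup Finset.univ ⟨∅, Finset.mem_univ ∅⟩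
    (fun S : Finset V => if IsStable G S then S.card else 0)
  have hdef : alphaNat G =
      Finset.univ.sup (fun S : Finset V => if IsStable G S then S.card else 0) := rfl
  by_cases h : IsStable G S
  · exact ⟨S, h, by rw [hdef, hS, if_pos h]⟩
  · refine ⟨∅, fun u hu => absurd hu (Finset.notMem_empty u), ?_⟩
    rw [hdef, hS, if_neg h, Finset.card_empty]

theorem alpha_splitVertex {V : Type} [Fintype V] [DecidableEq V]
    (G : SimpleGraph V) (v : V) (N1 N2 : Finset V)
    (hdeg : 4 ≤ (G.neighborSet v).ncard)
    (hunion : (↑N1 ∪ ↑N2 : Set V) = G.neighborSet v)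
    (hdisj : N1 ∩ N2 = ∅) (h1 : 2 ≤ N1.card) (h2 : 2 ≤ N2.card) :
    alphaNat (splitVertex G v N1 N2) = alphaNat G + 1 ∧
      (Fintype.card ({u : V // u ≠ v} ⊕ Fin 3) : ℤ) -
          2 * alphaNat (splitVertex G v N1 N2) =
        (Fintype.card V : ℤ) - 2 * alphaNat G := by
  classical
  set G' := splitVertex G v N1 N2 with hG'
  have hadj : ∀ p q : {u : V // u ≠ v} ⊕ Fin 3, G'.Adj p q ↔ p ≠ q ∧
      (((∃ a b : {u : V // u ≠ v}, p = Sum.inl a ∧ q = Sum.inl b ∧ G.Adj a.1 b.1) ∨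
       (p = Sum.inr 0 ∧ q = Sum.inr 2) ∨
       (p = Sum.inr 1 ∧ q = Sum.inr 2) ∨
       (∃ a : {u : V // u ≠ v}, p = Sum.inr 0 ∧ q = Sum.inl a ∧ a.1 ∈ N1) ∨
       (∃ a : {u : V // u ≠ v}, p = Sum.inr 1 ∧ q = Sum.inl a ∧ a.1 ∈ N2)) ∨
      ((∃ a b : {u : V // u ≠ v}, q = Sum.inl a ∧ p = Sum.inl b ∧ G.Adj a.1 b.1) ∨
       (q = Sum.inr 0 ∧ p = Sum.inr 2) ∨
       (q = Sum.inr 1 ∧ p = Sum.inr 2) ∨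
       (∃ a : {u : V // u ≠ v}, q = Sum.inr 0 ∧ p = Sum.inl a ∧ a.1 ∈ N1) ∨
       (∃ a : {u : V // u ≠ v}, q = Sum.inr 1 ∧ p = Sum.inl a ∧ a.1 ∈ N2))) :=
    fun p q => SimpleGraph.fromRel_adj _ p q
  have hfin : ∀ k : Fin 3, k = 0 ∨ k = 1 ∨ k = 2 := by decide
  -- key equality
  have key : alphaNat G' = alphaNat G + 1 := by
    apply le_antisymm
    · -- upper bound
      obtain ⟨S', hS', hcard'⟩ := exists_alphaNat G'
      rw [← hcard']
      set g : ({u : V // u ≠ v} ⊕ Fin 3) → V := Sum.elim (fun a => a.1) (fun _ => v) with hg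
      set A := S'.filter (fun p => p.isLeft = true) with hA
      set B := S'.filter (fun p => ¬ p.isLeft = true) with hB
      have hsplit : A.card + B.card = S'.card :=
        Finset.card_filter_add_card_filter_not _
      set T := A.image g with hT
      have hmemT : ∀ u ∈ T, ∃ a : {u : V // u ≠ v}, a.1 = u ∧ Sum.inl a ∈ S' := by
        intro u hu
        obtain ⟨p, hp, hpu⟩ := Finset.mem_image.1 hu
        rw [hA, Finset.mem_filter] at hp
        obtain ⟨hp1, hp2⟩ := hp
        match p, hp2 with
        | Sum.inl a, _ => exact ⟨a, hpu, hp1⟩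
      have hvT : v ∉ T := by
        intro hv
        obtain ⟨a, ha, -⟩ := hmemT v hv
        exact a.2 ha
      have hTcard : T.card = A.card := by
        apply Finset.card_image_of_injOn
        intro p hp q hq hpq
        simp only [hA, Finset.coe_filter, Set.mem_setOf_eq] at hp hq
        match p, hp.2, q, hq.2 with
        | Sum.inl a, _, Sum.inl b, _ =>
          simp only [hg, Sum.elim_inl] at hpq
          exact congrArg Sum.inl (Subtype.ext hpq)
      have hTstable : IsStable G T := by
        intro u1 hu1 u2 hu2 hadj12
        obtain ⟨a, ha, haS⟩ := hmemT u1 hu1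
        obtain ⟨b, hb, hbS⟩ := hmemT u2 hu2
        refine hS' _ haS _ hbS ?_
        rw [hadj]
        refine ⟨?_, Or.inl (Or.inl ⟨a, b, rfl, rfl, by rw [ha, hb]; exact hadj12⟩)⟩
        intro hab
        rw [Sum.inl.injEq] at hab
        rw [← ha, ← hb, hab] at hadj12
        exact G.irrefl hadj12
      by_cases hboth : Sum.inr 0 ∈ S' ∧ Sum.inr 1 ∈ S'
      · -- T ∪ {v} stable, B ⊆ {inr 0, inr 1}
        have h2not : (Sum.inr 2 : {u : V // u ≠ v} ⊕ Fin 3) ∉ S' := by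
          intro h2
          refine hS' _ hboth.1 _ h2 ?_
          rw [hadj]
          exact ⟨by simp, Or.inl (Or.inr (Or.inl ⟨rfl, rfl⟩))⟩
        have hBsub : B ⊆ {Sum.inr 0, Sum.inr 1} := by
          intro p hp
          rw [hB, Finset.mem_filter] at hp
          match p, hp.2 with
          | Sum.inr i, _ =>
            have hpS : Sum.inr i ∈ S' := hp.1
            rcases hfin i with rfl | rfl | rfl
            · exact Finset.mem_insert_self _ _
            · exact Finset.mem_insert_of_mem (Finset.mem_singleton_self _)
            · exact absurd hpS h2not
        have hBcard : B.card ≤ 2 := by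
          refine le_trans (Finset.card_le_card hBsub) ?_
          refine le_trans (Finset.card_insert_le _ _) ?_
          simp
        have hstable2 : IsStable G (insert v T) := by
          intro u1 hu1 u2 hu2 hadj12
          have hkey : ∀ u ∈ T, ¬ G.Adj u v := by
            intro u hu hadjuv
            obtain ⟨a, ha, haS⟩ := hmemT u hu
            have hn : u ∈ G.neighborSet v := G.adj_symm hadjuv
            rw [← hunion] at hn
            rcases hn with hn | hn
            · refine hS' _ hboth.1 _ haS ?_
              rw [hadj]
              exact ⟨by simp, Or.inl (Or.inr (Or.inr (Or.inr (Or.inl ⟨a, rfl, rfl, by rw [ha]; exact hn⟩))))⟩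
            · refine hS' _ hboth.2 _ haS ?_
              rw [hadj]
              exact ⟨by simp, Or.inl (Or.inr (Or.inr (Or.inr (Or.inr ⟨a, rfl, rfl, by rw [ha]; exact hn⟩))))⟩
          rcases Finset.mem_insert.1 hu1 with rfl | hu1 <;>
            rcases Finset.mem_insert.1 hu2 with rfl | hu2
          · exact G.irrefl hadj12
          · exact hkey _ hu2 (G.adj_symm hadj12)
          · exact hkey _ hu1 hadj12
          · exact hTstable _ hu1 _ hu2 hadj12
        have := card_le_alphaNat hstable2
        rw [Finset.card_insert_of_notMem hvT, hTcard] at this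
        omega
      · -- B has at most one element
        have hBcard : B.card ≤ 1 := by
          rw [Finset.card_le_one]
          intro p hp q hq
          rw [hB, Finset.mem_filter] at hp hq
          have hn02 : ¬ ((Sum.inr 0 : {u : V // u ≠ v} ⊕ Fin 3) ∈ S' ∧
              (Sum.inr 2 : {u : V // u ≠ v} ⊕ Fin 3) ∈ S') := by
            rintro ⟨ha0, ha2⟩
            exact hS' _ ha0 _ ha2 ((hadj _ _).2
              ⟨by simp, Or.inl (Or.inr (Or.inl ⟨rfl, rfl⟩))⟩)
          have hn12 : ¬ ((Sum.inr 1 : {u : V // u ≠ v} ⊕ Fin 3) ∈ S' ∧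
              (Sum.inr 2 : {u : V // u ≠ v} ⊕ Fin 3) ∈ S') := by
            rintro ⟨ha1, ha2⟩
            exact hS' _ ha1 _ ha2 ((hadj _ _).2
              ⟨by simp, Or.inl (Or.inr (Or.inr (Or.inl ⟨rfl, rfl⟩)))⟩)
          match p, hp.2, q, hq.2 with
          | Sum.inr i, _, Sum.inr j, _ =>
            have hpS : Sum.inr i ∈ S' := hp.1
            have hqS : Sum.inr j ∈ S' := hq.1
            congr 1
            rcases hfin i with rfl | rfl | rfl <;> rcases hfin j with rfl | rfl | rfl
            · rfl
            · exact absurd ⟨hpS, hqS⟩ hboth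
            · exact absurd ⟨hpS, hqS⟩ hn02
            · exact absurd ⟨hqS, hpS⟩ hboth
            · rfl
            · exact absurd ⟨hpS, hqS⟩ hn12
            · exact absurd ⟨hqS, hpS⟩ hn02
            · exact absurd ⟨hqS, hpS⟩ hn12
            · rfl
        have := card_le_alphaNat hTstable
        rw [hTcard] at this
        omega
    · -- lower bound
      obtain ⟨S, hS, hcard⟩ := exists_alphaNat G
      rw [← hcard]
      by_cases hv : v ∈ S
      · -- use image of S.erase v plus {inr 0, inr 1}
        set S0 := (S.erase v).attach.image
          (fun u => (Sum.inl ⟨u.1, fun h => (Finset.mem_erase.1 u.2).1 h⟩ :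
            {u : V // u ≠ v} ⊕ Fin 3)) with hS0
        have hmem : ∀ p ∈ S0, ∃ a : {u : V // u ≠ v}, p = Sum.inl a ∧ a.1 ∈ S.erase v := by
          intro p hp
          obtain ⟨u, -, hu⟩ := Finset.mem_image.1 hp
          exact ⟨_, hu.symm, u.2⟩
        have hS0card : S0.card = S.card - 1 := by
          rw [hS0, Finset.card_image_of_injective _ (by
            intro a b hab
            simp only [Sum.inl.injEq, Subtype.mk.injEq] at hab
            exact Subtype.ext hab), Finset.card_attach, Finset.card_erase_of_mem hv]
        set S' := insert (Sum.inr 0) (insert (Sum.inr 1) S0) with hS'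
        have h0 : (Sum.inr (0:Fin 3) : {u : V // u ≠ v} ⊕ Fin 3) ∉ insert (Sum.inr 1) S0 := by
          simp only [Finset.mem_insert]
          rintro (h | h)
          · exact absurd (Sum.inr.inj h) (by decide)
          · obtain ⟨a, ha, -⟩ := hmem _ h
            cases ha
        have h1' : (Sum.inr (1:Fin 3) : {u : V // u ≠ v} ⊕ Fin 3) ∉ S0 := by
          intro h
          obtain ⟨a, ha, -⟩ := hmem _ h
          cases ha
        have hcardS' : S'.card = S.card + 1 := by
          rw [hS', Finset.card_insert_of_notMem h0, Finset.card_insert_of_notMem h1', hS0card]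
          have : 1 ≤ S.card := Finset.card_pos.2 ⟨v, hv⟩
          omega
        have hnadj : ∀ u ∈ S, u ≠ v → ¬ (u ∈ N1 ∨ u ∈ N2) := by
          intro u hu _ hmem12
          have : u ∈ G.neighborSet v := by
            rw [← hunion]
            rcases hmem12 with h | h
            · exact Or.inl h
            · exact Or.inr h
          exact hS _ hv _ hu (this : G.Adj v u)
        have hstable' : IsStable G' S' := by
          intro p hp q hq hpq
          rw [hadj] at hpq
          obtain ⟨hne, hrel⟩ := hpq
          have hcases : ∀ r ∈ S', r = Sum.inr 0 ∨ r = Sum.inr 1 ∨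
              ∃ a : {u : V // u ≠ v}, r = Sum.inl a ∧ a.1 ∈ S.erase v := by
            intro r hr
            rw [hS', Finset.mem_insert, Finset.mem_insert] at hr
            rcases hr with rfl | rfl | hr
            · exact Or.inl rfl
            · exact Or.inr (Or.inl rfl)
            · exact Or.inr (Or.inr (hmem _ hr))
          rcases hcases p hp with rfl | rfl | ⟨a, rfl, ha⟩ <;>
            rcases hcases q hq with rfl | rfl | ⟨b, rfl, hb⟩
          · exact hne rfl
          · simp at hrel
          · simp only [Sum.inl.injEq, Sum.inr.injEq, reduceCtorEq, Fin.reduceEq, false_and, and_false,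
              exists_false, or_false, false_or, true_and, exists_eq_left'] at hrel
            exact hnadj _ (Finset.mem_of_mem_erase hb) (Finset.mem_erase.1 hb).1 (Or.inl hrel)
          · simp at hrel
          · exact hne rfl
          · simp only [Sum.inl.injEq, Sum.inr.injEq, reduceCtorEq, Fin.reduceEq, false_and, and_false,
              exists_false, or_false, false_or, true_and, exists_eq_left'] at hrel
            exact hnadj _ (Finset.mem_of_mem_erase hb) (Finset.mem_erase.1 hb).1 (Or.inr hrel)
          · simp only [Sum.inl.injEq, Sum.inr.injEq, reduceCtorEq, Fin.reduceEq, false_and, and_false,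
              exists_false, or_false, false_or, true_and, exists_eq_left'] at hrel
            exact hnadj _ (Finset.mem_of_mem_erase ha) (Finset.mem_erase.1 ha).1 (Or.inl hrel)
          · simp only [Sum.inl.injEq, Sum.inr.injEq, reduceCtorEq, Fin.reduceEq, false_and, and_false,
              exists_false, or_false, false_or, true_and, exists_eq_left'] at hrel
            exact hnadj _ (Finset.mem_of_mem_erase ha) (Finset.mem_erase.1 ha).1 (Or.inr hrel)
          · simp only [Sum.inl.injEq, Sum.inr.injEq, reduceCtorEq, Fin.reduceEq, false_and, and_false,
              exists_false, or_false, false_or, true_and, exists_eq_left',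
              exists_and_left, exists_eq_left] at hrel
            rcases hrel with h | h
            · exact hS _ (Finset.mem_of_mem_erase ha) _ (Finset.mem_of_mem_erase hb) h
            · exact hS _ (Finset.mem_of_mem_erase hb) _ (Finset.mem_of_mem_erase ha) h
        have := card_le_alphaNat hstable'
        rw [hcardS'] at this
        exact this
      · -- use image of S plus {inr 2}
        set S0 := S.attach.image
          (fun u => (Sum.inl ⟨u.1, fun h => hv (h ▸ u.2)⟩ :
            {u : V // u ≠ v} ⊕ Fin 3)) with hS0
        have hmem : ∀ p ∈ S0, ∃ a : {u : V // u ≠ v}, p = Sum.inl a ∧ a.1 ∈ S := by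
          intro p hp
          obtain ⟨u, -, hu⟩ := Finset.mem_image.1 hp
          exact ⟨_, hu.symm, u.2⟩
        have hS0card : S0.card = S.card := by
          rw [hS0, Finset.card_image_of_injective _ (by
            intro a b hab
            simp only [Sum.inl.injEq, Subtype.mk.injEq] at hab
            exact Subtype.ext hab), Finset.card_attach]
        set S' := insert (Sum.inr 2) S0 with hS'
        have h2' : (Sum.inr (2:Fin 3) : {u : V // u ≠ v} ⊕ Fin 3) ∉ S0 := by
          intro h
          obtain ⟨a, ha, -⟩ := hmem _ h
          cases ha
        have hcardS' : S'.card = S.card + 1 := by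
          rw [hS', Finset.card_insert_of_notMem h2', hS0card]
        have hstable' : IsStable G' S' := by
          intro p hp q hq hpq
          rw [hadj] at hpq
          obtain ⟨hne, hrel⟩ := hpq
          have hcases : ∀ r ∈ S', r = Sum.inr 2 ∨
              ∃ a : {u : V // u ≠ v}, r = Sum.inl a ∧ a.1 ∈ S := by
            intro r hr
            rw [hS', Finset.mem_insert] at hr
            rcases hr with rfl | hr
            · exact Or.inl rfl
            · exact Or.inr (hmem _ hr)
          rcases hcases p hp with rfl | ⟨a, rfl, ha⟩ <;>
            rcases hcases q hq with rfl | ⟨b, rfl, hb⟩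
          · exact hne rfl
          · simp at hrel
          · simp at hrel
          · simp only [Sum.inl.injEq, Sum.inr.injEq, reduceCtorEq, Fin.reduceEq, false_and, and_false,
              exists_false, or_false, false_or, true_and, exists_eq_left',
              exists_and_left, exists_eq_left] at hrel
            rcases hrel with h | h
            · exact hS _ ha _ hb h
            · exact hS _ hb _ ha h
        have := card_le_alphaNat hstable'
        rw [hcardS'] at this
        exact this
  refine ⟨key, ?_⟩
  have hcardW : Fintype.card ({u : V // u ≠ v} ⊕ Fin 3) = (Fintype.card V - 1) + 3 := by
    rw [Fintype.card_sum, Fintype.card_fin]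
    congr 1
    simp [Fintype.card_subtype_compl]
  have hpos : 1 ≤ Fintype.card V := Fintype.card_pos_iff.2 ⟨v⟩
  rw [key, hcardW]
  push_cast [Nat.cast_sub hpos]
  ring
end

section
/- If T_1, ..., T_k is a sequence of subsets of the vertex set of a graph G such that whenever uv is an edge with both endpoints in T_i (for i < k) we have u ∉ T_{i+1} and v ∉ T_{i+1}, then for each j ≥ 3, every edge inside the set X_j = ((T_1 ∪ ⋯ ∪ T_{j-1}) ∩ T_j) ∪ ((T_1 ∩ ⋯ ∩ T_{j-1}) \ T_j) is also an edge inside T_j; that is, E(X_j) ⊆ E(T_j). -/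
open Finset

/-- `T` is a set of maximum worth in `G` with unit weights. -/
def IsMaxWorth {V : Type} [Fintype V] (G : SimpleGraph V) (T : Finset V) : Prop :=
  ∀ S : Finset V, (S.card : ℤ) - edgesIn G S ≤ (T.card : ℤ) - edgesIn G T

open Classical in
/-- `Xset T j = ((T 0 ∪ ⋯ ∪ T (j-1)) ∩ T j) ∪ ((T 0 ∩ ⋯ ∩ T (j-1)) \ T j)`. -/
noncomputable def Xset {V : Type} [Fintype V] {k : ℕ} (T : Fin k → Finset V) (j : Fin k) :
    Finset V :=
  ((Finset.univ.filter fun v => ∃ i < j, v ∈ T i) ∩ T j) ∪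
    ((Finset.univ.filter fun v => ∀ i < j, v ∈ T i) \ T j)

theorem edges_in_Xset_subset {V : Type} [Fintype V] (G : SimpleGraph V)
    {k : ℕ} (T : Fin k → Finset V)
    (hchain : ∀ i : Fin k, ∀ h : (i : ℕ) + 1 < k, ∀ u v : V,
      G.Adj u v → u ∈ T i → v ∈ T i →
        u ∉ T ⟨(i : ℕ) + 1, h⟩ ∧ v ∉ T ⟨(i : ℕ) + 1, h⟩) :
    ∀ j : Fin k, 2 ≤ (j : ℕ) → ∀ u v : V,
      G.Adj u v → u ∈ Xset T j → v ∈ Xset T j → u ∈ T j ∧ v ∈ T j := by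
  intro j hj u v hadj hu hv
  have hjk : (j : ℕ) < k := j.isLt
  classical
  simp only [Xset, Finset.mem_union, Finset.mem_inter, Finset.mem_sdiff, Finset.mem_filter,
    Finset.mem_univ, true_and] at hu hv
  have mixed : ∀ a b : V, G.Adj a b → ((∃ i < j, a ∈ T i) ∧ a ∈ T j) →
      ((∀ i < j, b ∈ T i) ∧ b ∉ T j) → False := by
    rintro a b hab ⟨⟨i, hij, hai⟩, haj⟩ ⟨hb, hbj⟩
    have hij' : (i : ℕ) < (j : ℕ) := hij
    have hik : (i : ℕ) + 1 < k := by omega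
    obtain ⟨ha1, hb1⟩ := hchain i hik a b hab hai (hb i hij)
    rcases eq_or_lt_of_le (Nat.succ_le_of_lt hij') with heq | hlt
    · have : (⟨(i : ℕ) + 1, hik⟩ : Fin k) = j := Fin.ext heq
      exact ha1 (this ▸ haj)
    · exact hb1 (hb ⟨(i : ℕ) + 1, hik⟩ hlt)
  rcases hu with hu1 | hu2 <;> rcases hv with hv1 | hv2
  · exact ⟨hu1.2, hv1.2⟩
  · exact absurd (mixed u v hadj hu1 hv2) (not_false)
  · exact absurd (mixed v u hadj.symm hv1 hu2) (not_false)
  · exfalso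
    have h0 : (⟨0, by omega⟩ : Fin k) < j := by
      simp [Fin.lt_def]; omega
    have h1k : (0 : ℕ) + 1 < k := by omega
    obtain ⟨hu', _⟩ := hchain ⟨0, by omega⟩ h1k u v hadj (hu2.1 _ h0) (hv2.1 _ h0)
    exact hu' (hu2.1 ⟨1, by omega⟩ (by simp [Fin.lt_def]; omega))
end
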